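/- arXiv:2205.07111 — 7 statements merged into one kernel-verified Lean document; each statement's English description precedes it below -/
import Mathlib

section
/- Let X be a complex Banach space, G ⊆ X a bounded balanced domain, and f : G → ℂ a holomorphic function whose values lie in the right half-plane ℍ = {z ∈ ℂ : Re z > 0}, with power series expansion f(x) = f(0) + Σ_{m≥1} (1/m!) D^m f(0)(x^m) in a neighbourhood of the origin. Then for every x ∈ (1/3)·G one has Σ_{m≥1} |(1/m!) D^m f(0)(x^m)| ≤ Re f(0), i.e. the Bohr sum of the nonconstant terms is bounded by the distance d(f(0), ∂ℍ) = Re f(0). -/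
/-!
Write `x = y / 3` with `y ∈ G`. Since `G` is balanced, `g z = f (z • y)` is holomorphic on the
closed unit disc with `Re g > 0`, and its Taylor coefficients are the terms `p n (y, …, y)`.
Carathéodory's inequality `‖a (n + 1)‖ ≤ 2 Re a 0` bounds them: by Cauchy's formula `a n` is the
circle average of `z⁻¹ ^ n * g z`, and adding the circle average of `z⁻¹ ^ (n + 1) * conj (g z)`,
which vanishes by the mean value property for `z ^ (n + 1) * g z`, replaces `g` by `2 Re g ≥ 0`.
At `z = 1 / 3` the terms are then dominated by the geometric series
`∑ 2 Re g(0) / 3 ^ (n + 1) = Re g(0)`.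
-/

open scoped Pointwise

open Complex ComplexConjugate Metric Real

theorem norm_circleAverage_le {E : Type*} [NormedAddCommGroup E] [NormedSpace ℝ E] (F : ℂ → E)
    (c : ℂ) (R : ℝ) :
    ‖circleAverage F c R‖ ≤ circleAverage (fun z ↦ ‖F z‖) c R := by
  rw [circleAverage, circleAverage, norm_smul, Real.norm_of_nonneg (inv_pos.2 two_pi_pos).le,
    smul_eq_mul]
  gcongr
  exact intervalIntegral.norm_integral_le_integral_norm two_pi_pos.le

theorem cauchyPowerSeries_coeff_eq_circleAverage {E : Type*} [NormedAddCommGroup E]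
    [NormedSpace ℂ E] (g : ℂ → E) (c : ℂ) {R : ℝ} (hR : R ≠ 0) (n : ℕ) :
    (cauchyPowerSeries g c R).coeff n = circleAverage (fun z ↦ (z - c)⁻¹ ^ n • g z) c R := by
  rw [FormalMultilinearSeries.coeff, Pi.one_def, cauchyPowerSeries_apply,
    circleAverage_eq_circleIntegral hR]
  simp only [one_div, smul_comm (_ - c)⁻¹ ((_ - c)⁻¹ ^ n)]

section
variable {g : ℂ → ℂ} {c : ℂ} {R : ℝ}

theorem DiffContOnCl.continuousOn_sphere (hg : DiffContOnCl ℂ g (ball c R)) (hR : 0 < R) :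
    ContinuousOn g (sphere c R) :=
  hg.continuousOn.mono (closure_ball c hR.ne' ▸ sphere_subset_closedBall)

theorem DiffContOnCl.circleAverage_re (hg : DiffContOnCl ℂ g (ball c R)) (hR : 0 < R) :
    Real.circleAverage (fun z ↦ (g z).re) c R = (g c).re := by
  have hintegrable := (hg.continuousOn_sphere hR).circleIntegrable hR.le
  rw [← abs_of_pos hR] at hg
  rw [← hg.circleAverage]
  exact reCLM.circleAverage_comp_comm hintegrable

theorem DiffContOnCl.circleAverage_inv_pow_succ_mul_conj (hg : DiffContOnCl ℂ g (ball c R))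
    (hR : 0 < R) (n : ℕ) :
    Real.circleAverage (fun z ↦ (z - c)⁻¹ ^ (n + 1) * conj (g z)) c R = 0 := by
  have hmean : Real.circleAverage (fun z ↦ (z - c) ^ (n + 1) * g z) c R = 0 := by
    have hdiff : DiffContOnCl ℂ (fun z ↦ (z - c) ^ (n + 1) * g z) (ball c |R|) := by
      rw [abs_of_pos hR]
      exact (((differentiable_id.sub_const c).pow _).diffContOnCl).smul hg
    simp [hdiff.circleAverage]
  have hintegrable : CircleIntegrable (fun z ↦ (z - c) ^ (n + 1) * g z) c R :=
    (((continuous_id.sub continuous_const).pow _).continuousOn.mul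
      (hg.continuousOn_sphere hR)).circleIntegrable hR.le
  -- on the circle, `(z - c)⁻¹ = conj (z - c) / R ^ 2`
  calc Real.circleAverage (fun z ↦ (z - c)⁻¹ ^ (n + 1) * conj (g z)) c R
      = Real.circleAverage (fun z ↦ ((R : ℂ) ^ 2)⁻¹ ^ (n + 1) •
          conjCLE.toContinuousLinearMap ((z - c) ^ (n + 1) * g z)) c R := by
        refine circleAverage_congr_sphere fun z hz ↦ ?_
        rw [abs_of_pos hR, mem_sphere_iff_norm] at hz
        rw [inv_def, normSq_eq_norm_sq, hz]
        simp only [ContinuousLinearEquiv.coe_coe, conjCLE_apply, map_mul, map_pow, smul_eq_mul]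
        push_cast
        ring
    _ = 0 := by
        rw [circleAverage_fun_smul, ← Function.comp_def,
          ContinuousLinearMap.circleAverage_comp_comm _ hintegrable, hmean, map_zero, smul_zero]

theorem HasFPowerSeriesAt.norm_coeff_succ_mul_pow_le {q : FormalMultilinearSeries ℂ ℂ ℂ}
    (hq : HasFPowerSeriesAt g q c) (hg : DiffContOnCl ℂ g (ball c R)) (hR : 0 < R)
    (hre : ∀ z ∈ sphere c R, 0 ≤ (g z).re) (n : ℕ) :
    ‖q.coeff (n + 1)‖ * R ^ (n + 1) ≤ 2 * (g c).re := by
  have hcauchy : q = cauchyPowerSeries g c R := hq.eq_formalMultilinearSeries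
    (hg.hasFPowerSeriesOnBall (R := ⟨R, hR.le⟩) hR).hasFPowerSeriesAt
  have hcont := hg.continuousOn_sphere hR
  have hweight : ContinuousOn (fun z ↦ (z - c)⁻¹ ^ (n + 1)) (sphere c R) :=
    ((continuousOn_id.sub continuousOn_const).inv₀ fun z hz ↦
      sub_ne_zero.mpr (ne_of_mem_sphere hz hR.ne')).pow _
  have hintegrable : CircleIntegrable (fun z ↦ (z - c)⁻¹ ^ (n + 1) • g z) c R :=
    (hweight.smul hcont).circleIntegrable hR.le
  have hintegrable_conj : CircleIntegrable (fun z ↦ (z - c)⁻¹ ^ (n + 1) * conj (g z)) c R :=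
    (hweight.mul (continuous_conj.comp_continuousOn hcont)).circleIntegrable hR.le
  have hcoeff : q.coeff (n + 1) =
      Real.circleAverage (fun z ↦ (z - c)⁻¹ ^ (n + 1) * (2 * (g z).re : ℝ)) c R := by
    rw [hcauchy, cauchyPowerSeries_coeff_eq_circleAverage _ _ hR.ne',
      ← add_zero (Real.circleAverage _ _ _), ← hg.circleAverage_inv_pow_succ_mul_conj hR n,
      ← circleAverage_fun_add hintegrable hintegrable_conj]
    refine circleAverage_congr_sphere fun z _ ↦ ?_
    rw [smul_eq_mul, ← mul_add, add_conj]
  have hnorm :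
      Real.circleAverage (fun z ↦ ‖(z - c)⁻¹ ^ (n + 1) * (2 * (g z).re : ℝ)‖) c R =
        (R ^ (n + 1))⁻¹ * (2 * (g c).re) := by
    calc Real.circleAverage (fun z ↦ ‖(z - c)⁻¹ ^ (n + 1) * (2 * (g z).re : ℝ)‖) c R
        = Real.circleAverage (fun z ↦ ((R ^ (n + 1))⁻¹ * 2) • (g z).re) c R := by
          refine circleAverage_congr_sphere fun z hz ↦ ?_
          rw [abs_of_pos hR] at hz
          rw [norm_mul, norm_pow, norm_inv, mem_sphere_iff_norm.mp hz, Complex.norm_real,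
            Real.norm_of_nonneg (mul_nonneg zero_le_two (hre z hz)), inv_pow, smul_eq_mul,
            mul_assoc]
      _ = (R ^ (n + 1))⁻¹ * (2 * (g c).re) := by
          rw [circleAverage_fun_smul, hg.circleAverage_re hR, smul_eq_mul, mul_assoc]
  calc ‖q.coeff (n + 1)‖ * R ^ (n + 1)
      ≤ Real.circleAverage (fun z ↦ ‖(z - c)⁻¹ ^ (n + 1) * (2 * (g z).re : ℝ)‖) c R
          * R ^ (n + 1) := by
        rw [hcoeff]
        gcongr
        exact norm_circleAverage_le _ _ _
    _ = 2 * (g c).re := by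
        rw [hnorm]
        field_simp

theorem HasFPowerSeriesAt.bohr_inequality {q : FormalMultilinearSeries ℂ ℂ ℂ}
    (hq : HasFPowerSeriesAt g q c) (hg : DiffContOnCl ℂ g (ball c R)) (hR : 0 < R)
    (hre : ∀ z ∈ sphere c R, 0 ≤ (g z).re) {z : ℂ} (hz : ‖z‖ ≤ R / 3) :
    Summable (fun m : ℕ ↦ ‖q (m + 1) fun _ ↦ z‖) ∧
      ∑' m : ℕ, ‖q (m + 1) fun _ ↦ z‖ ≤ (g c).re := by
  have hterm (m : ℕ) : ‖q (m + 1) fun _ ↦ z‖ ≤ 2 * (g c).re / 3 * (1 / 3) ^ m := by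
    have hcarath := hq.norm_coeff_succ_mul_pow_le hg hR hre m
    calc ‖q (m + 1) fun _ ↦ z‖ = ‖z‖ ^ (m + 1) * ‖q.coeff (m + 1)‖ := by
          rw [q.apply_eq_pow_smul_coeff, norm_smul, norm_pow]
      _ ≤ (R / 3) ^ (m + 1) * ‖q.coeff (m + 1)‖ := by gcongr
      _ = (‖q.coeff (m + 1)‖ * R ^ (m + 1)) / 3 * (1 / 3) ^ m := by ring
      _ ≤ 2 * (g c).re / 3 * (1 / 3) ^ m := by gcongr
  have hgeom : HasSum (fun m : ℕ ↦ 2 * (g c).re / 3 * (1 / 3) ^ m) (g c).re := by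
    have h := (hasSum_geometric_of_lt_one (r := (1 / 3 : ℝ)) (by norm_num)
      (by norm_num)).mul_left (2 * (g c).re / 3)
    rwa [show 2 * (g c).re / 3 * (1 - 1 / 3)⁻¹ = (g c).re by ring] at h
  have hsum : Summable (fun m : ℕ ↦ ‖q (m + 1) fun _ ↦ z‖) :=
    hgeom.summable.of_nonneg_of_le (fun _ ↦ norm_nonneg _) hterm
  exact ⟨hsum, hasSum_le hterm hsum.hasSum hgeom⟩

end

theorem bohr_halfPlane_general {X : Type*} [NormedAddCommGroup X] [NormedSpace ℂ X]
    (G : Set X)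
    (hGbal : ∀ z : ℂ, ‖z‖ ≤ 1 → z • G ⊆ G)
    (f : X → ℂ) (hf : DifferentiableOn ℂ f G)
    (hmaps : Set.MapsTo f G {z : ℂ | 0 < z.re})
    (p : FormalMultilinearSeries ℂ X ℂ) (hp : HasFPowerSeriesAt f p 0)
    (x : X) (hx : x ∈ (1 / 3 : ℂ) • G) :
    Summable (fun m : ℕ => ‖p (m + 1) (fun _ => x)‖) ∧
      ∑' m : ℕ, ‖p (m + 1) (fun _ => x)‖ ≤ (f 0).re := by
  obtain ⟨y, hy, rfl⟩ := hx
  set L := ContinuousLinearMap.toSpanSingleton ℂ y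
  have hline : Set.MapsTo L (closedBall 0 1) G := fun z hz ↦
    hGbal z (mem_closedBall_zero_iff.mp hz) (Set.smul_mem_smul_set hy)
  have hg : DiffContOnCl ℂ (f ∘ L) (ball 0 1) := by
    refine DifferentiableOn.diffContOnCl ?_
    rw [closure_ball 0 one_ne_zero]
    exact hf.comp L.differentiableOn hline
  have hq : HasFPowerSeriesAt (f ∘ L) (p.compContinuousLinearMap L) 0 :=
    HasFPowerSeriesAt.compContinuousLinearMap (by rwa [map_zero])
  have hre (z : ℂ) (hz : z ∈ sphere 0 1) : 0 ≤ (f (L z)).re :=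
    (hmaps (hline (sphere_subset_closedBall hz))).le
  simpa only [FormalMultilinearSeries.compContinuousLinearMap_apply, Function.comp_def, L,
    ContinuousLinearMap.toSpanSingleton_apply, map_zero]
    using hq.bohr_inequality hg one_pos hre (z := 1 / 3) (by norm_num)

/-- Bohr's theorem for holomorphic maps from a bounded balanced domain `G` in a
complex Banach space into the right half-plane: for `x ∈ (1/3)·G`, the Bohr sum
of the nonconstant terms is bounded by `d(f(0), ∂ℍ) = Re f(0)`. -/
theorem bohr_halfPlane {X : Type*} [NormedAddCommGroup X] [NormedSpace ℂ X]
    [CompleteSpace X]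
    (G : Set X) (hGopen : IsOpen G) (hGconn : IsConnected G)
    (hGbdd : Bornology.IsBounded G)
    (hGbal : ∀ z : ℂ, ‖z‖ ≤ 1 → z • G ⊆ G)
    (f : X → ℂ) (hf : DifferentiableOn ℂ f G)
    (hmaps : Set.MapsTo f G {z : ℂ | 0 < z.re})
    (p : FormalMultilinearSeries ℂ X ℂ) (hp : HasFPowerSeriesAt f p 0)
    (x : X) (hx : x ∈ (1 / 3 : ℂ) • G) :
    Summable (fun m : ℕ => ‖p (m + 1) (fun _ => x)‖) ∧
      ∑' m : ℕ, ‖p (m + 1) (fun _ => x)‖ ≤ (f 0).re :=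
  bohr_halfPlane_general G hGbal f hf hmaps p hp x hx
end

section
/- Let X be a nontrivial complex Banach space and G ⊆ X a bounded balanced domain. For every r₀ with 1/3 < r₀ < 1 there exist a holomorphic function f : G → ℂ with values in the right half-plane ℍ = {z : Re z > 0} (with power series expansion f(x) = f(0) + Σ_{m≥1} (1/m!) D^m f(0)(x^m) at 0) and a point x ∈ r₀·G such that Σ_{m≥1} |(1/m!) D^m f(0)(x^m)| > Re f(0). Hence the constant 1/3 in the Bohr inequality for H(G, ℍ) is best possible. -/
/-!
Take a continuous linear functional `ψ` with `sup_G ‖ψ‖ = a`, where `1 / (3 r₀) < a < 1`, and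
`f = cayley ∘ ψ`, where `cayley w = (1 - w) / (1 + w)` maps the unit disc into the right
half-plane. Then `f 0 = 1` and the `m`-th homogeneous term of `f` at `x` is `2 (-ψ x) ^ m`, so
the Bohr sum at `x` is `2 s / (1 - s)` with `s = ‖ψ x‖`; this exceeds `1` as soon as `s > 1/3`,
and such points exist in `r₀ • G` since `sup_{r₀ • G} ‖ψ‖ = r₀ a > 1/3`.
-/

open scoped Pointwise

open Filter Topology FormalMultilinearSeries

/-- `(1 - w) / (1 + w)`, written as `2 / (1 + w) - 1` so that its Taylor series at `0` is twice
the alternating geometric series minus `1`. -/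
noncomputable def cayley (w : ℂ) : ℂ := 2 * (1 + w)⁻¹ - 1

lemma one_add_ne_zero_of_norm_lt_one {w : ℂ} (hw : ‖w‖ < 1) : 1 + w ≠ 0 := by
  intro h
  rw [eq_neg_of_add_eq_zero_right h, norm_neg, norm_one] at hw
  exact lt_irrefl _ hw

lemma cayley_zero : cayley 0 = 1 := by norm_num [cayley]

lemma re_cayley_pos {w : ℂ} (hw : ‖w‖ < 1) : 0 < (cayley w).re := by
  have hn : 0 < Complex.normSq (1 + w) := Complex.normSq_pos.2 (one_add_ne_zero_of_norm_lt_one hw)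
  have hw2 : w.re * w.re + w.im * w.im < 1 := by
    rw [← Complex.normSq_apply, ← Complex.sq_norm]
    nlinarith [norm_nonneg w]
  simp only [cayley, Complex.sub_re, Complex.mul_re, Complex.inv_re, Complex.inv_im,
    Complex.re_ofNat, Complex.im_ofNat, zero_mul, sub_zero, Complex.one_re, sub_pos]
  rw [← mul_div_assoc, one_lt_div hn, Complex.normSq_apply]
  simp only [Complex.add_re, Complex.add_im, Complex.one_re, Complex.one_im]
  nlinarith

lemma differentiableAt_cayley {w : ℂ} (hw : ‖w‖ < 1) : DifferentiableAt ℂ cayley w :=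
  (((differentiableAt_const 1).add differentiableAt_id).inv
    (one_add_ne_zero_of_norm_lt_one hw)).const_mul 2 |>.sub_const 1

noncomputable def cayleySeries : FormalMultilinearSeries ℂ ℂ ℂ :=
  (2 : ℂ) • alternatingGeometricSeries ℂ ℂ - constFormalMultilinearSeries ℂ ℂ 1

lemma hasFPowerSeriesAt_cayley : HasFPowerSeriesAt cayley cayleySeries 0 := by
  have h := ((hasFPowerSeriesOnBall_inverse_one_add ℂ ℂ).hasFPowerSeriesAt.const_smul
    (c := (2 : ℂ))).sub (hasFPowerSeriesAt_const (c := (1 : ℂ)))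
  have hfun : cayley = ((2 : ℂ) • fun w => Ring.inverse (1 + w)) - fun _ => 1 := by
    ext w
    simp [cayley, Ring.inverse_eq_inv']
  rw [hfun]
  exact h

lemma cayleySeries_succ_apply (n : ℕ) (w : ℂ) :
    cayleySeries (n + 1) (fun _ => w) = 2 * (-w) ^ (n + 1) := by
  simp only [cayleySeries, FormalMultilinearSeries.sub_apply, FormalMultilinearSeries.smul_apply,
    constFormalMultilinearSeries_apply_succ, sub_zero, _root_.smul_apply,
    alternatingGeometricSeries, ofScalars_apply_eq, smul_eq_mul, neg_pow w]

lemma hasSum_norm_cayleySeries_succ {w : ℂ} (hw : ‖w‖ < 1) :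
    HasSum (fun m => ‖cayleySeries (m + 1) (fun _ => w)‖) (2 * ‖w‖ / (1 - ‖w‖)) := by
  have hterm : (fun m => ‖cayleySeries (m + 1) (fun _ => w)‖) = fun m => 2 * ‖w‖ * ‖w‖ ^ m := by
    ext m
    rw [cayleySeries_succ_apply, norm_mul, norm_pow, norm_neg, pow_succ, Complex.norm_two]
    ring
  rw [hterm, div_eq_mul_inv]
  exact (hasSum_geometric_of_lt_one (norm_nonneg w) hw).mul_left (2 * ‖w‖)

lemma one_lt_two_mul_div_one_sub {s : ℝ} (h3 : 1 / 3 < s) (h1 : s < 1) : 1 < 2 * s / (1 - s) := by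
  rw [one_lt_div (by linarith)]
  linarith

lemma exists_dual_isLUB_norm_image {𝕜 X : Type*} [RCLike 𝕜] [NormedAddCommGroup X]
    [NormedSpace 𝕜 X] [Nontrivial X] {G : Set X} (hG : Bornology.IsBounded G) (hG0 : G ∈ 𝓝 0)
    {a : ℝ} (ha : 0 < a) : ∃ ψ : StrongDual 𝕜 X, IsLUB ((fun x => ‖ψ x‖) '' G) a := by
  obtain ⟨u, hu⟩ := exists_ne (0 : X)
  obtain ⟨ℓ, hℓ⟩ := SeparatingDual.exists_ne_zero (R := 𝕜) hu
  have hsmul : Tendsto (fun c : 𝕜 => c • u) (𝓝[≠] 0) (𝓝 0) := by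
    simpa using (tendsto_nhdsWithin_of_tendsto_nhds (tendsto_id (x := 𝓝 (0 : 𝕜)))).smul_const u
  obtain ⟨c, hcG, hc⟩ := ((hsmul.eventually hG0).and self_mem_nhdsWithin).exists
  obtain ⟨C, hC⟩ := hG.exists_norm_le
  have hbdd : BddAbove ((fun x => ‖ℓ x‖) '' G) := by
    refine ⟨‖ℓ‖ * C, ?_⟩
    rintro - ⟨x, hx, rfl⟩
    exact (ℓ.le_opNorm x).trans (by gcongr; exact hC x hx)
  set T := sSup ((fun x => ‖ℓ x‖) '' G)
  have hT : IsLUB ((fun x => ‖ℓ x‖) '' G) T := isLUB_csSup ⟨_, c • u, hcG, rfl⟩ hbdd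
  have hTpos : 0 < T :=
    (norm_pos_iff.2 (by simpa [hℓ] using hc)).trans_le (hT.1 ⟨c • u, hcG, rfl⟩)
  have haT : 0 < a / T := div_pos ha hTpos
  refine ⟨((a / T : ℝ) : 𝕜) • ℓ, ?_⟩
  have hnorm : (fun x => ‖(((a / T : ℝ) : 𝕜) • ℓ) x‖) = fun x => a / T * ‖ℓ x‖ := by
    ext x
    rw [_root_.smul_apply, norm_smul, RCLike.norm_ofReal, abs_of_pos haT]
  have h := hT.mul_left haT.le
  rwa [div_mul_cancel₀ a hTpos.ne', Set.image_image, ← hnorm] at h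

theorem bohr_halfPlane_sharp_general {X : Type*} [NormedAddCommGroup X] [NormedSpace ℂ X]
    [Nontrivial X]
    (G : Set X) (hGopen : IsOpen G) (hGconn : IsConnected G)
    (hGbdd : Bornology.IsBounded G)
    (hGbal : ∀ z : ℂ, ‖z‖ ≤ 1 → z • G ⊆ G)
    (r₀ : ℝ) (hr₀ : 1 / 3 < r₀) (hr₀' : r₀ < 1) :
    ∃ (f : X → ℂ) (p : FormalMultilinearSeries ℂ X ℂ),
      DifferentiableOn ℂ f G ∧ Set.MapsTo f G {z : ℂ | 0 < z.re} ∧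
      HasFPowerSeriesAt f p 0 ∧
      ∃ x ∈ (r₀ : ℂ) • G,
        Summable (fun m : ℕ => ‖p (m + 1) (fun _ => x)‖) ∧
        (f 0).re < ∑' m : ℕ, ‖p (m + 1) (fun _ => x)‖ := by
  have hr₀pos : 0 < r₀ := by linarith
  have hG0 : G ∈ 𝓝 (0 : X) :=
    hGopen.mem_nhds (Balanced.zero_mem (𝕜 := ℂ) hGbal hGconn.nonempty)
  obtain ⟨a, hra, ha1⟩ := exists_between (show 1 / (3 * r₀) < 1 by
    rw [div_lt_one (by positivity)]; linarith)
  have ha : 0 < a := (by positivity : (0 : ℝ) < 1 / (3 * r₀)).trans hra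
  obtain ⟨ψ, hψ⟩ := exists_dual_isLUB_norm_image (𝕜 := ℂ) hGbdd hG0 ha
  have hψG : ∀ x ∈ G, ‖ψ x‖ < 1 := fun x hx => (hψ.1 ⟨x, hx, rfl⟩).trans_lt ha1
  obtain ⟨-, ⟨y, hyG, rfl⟩, hy, -⟩ := hψ.exists_between hra
  have hs : ‖ψ ((r₀ : ℂ) • y)‖ = r₀ * ‖ψ y‖ := by
    rw [map_smul, norm_smul, Complex.norm_real, Real.norm_of_nonneg hr₀pos.le]
  have hs3 : 1 / 3 < ‖ψ ((r₀ : ℂ) • y)‖ := by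
    rw [hs, ← div_lt_iff₀' hr₀pos, div_div]
    exact hy
  have hs1 : ‖ψ ((r₀ : ℂ) • y)‖ < 1 :=
    hs ▸ mul_lt_one_of_nonneg_of_lt_one_left hr₀pos.le hr₀' (hψG y hyG).le
  have hsum := hasSum_norm_cayleySeries_succ hs1
  refine ⟨cayley ∘ ψ, cayleySeries.compContinuousLinearMap ψ,
    fun x hx =>
      ((differentiableAt_cayley (hψG x hx)).comp x ψ.differentiableAt).differentiableWithinAt,
    fun x hx => re_cayley_pos (hψG x hx), ?_, (r₀ : ℂ) • y, Set.smul_mem_smul_set hyG,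
    hsum.summable, ?_⟩
  · exact (map_zero ψ ▸ hasFPowerSeriesAt_cayley).compContinuousLinearMap
  · rw [Function.comp_apply, map_zero, cayley_zero, Complex.one_re]
    exact (one_lt_two_mul_div_one_sub hs3 hs1).trans_eq hsum.tsum_eq.symm

/-- Sharpness of the constant `1/3` in Bohr's theorem for holomorphic maps from a
bounded balanced domain `G` of a nontrivial complex Banach space into the right
half-plane: for any `1/3 < r₀ < 1` there are `f ∈ H(G, ℍ)` and `x ∈ r₀·G` whose
Bohr sum of nonconstant terms exceeds `Re f(0)`. -/
theorem bohr_halfPlane_sharp {X : Type*} [NormedAddCommGroup X] [NormedSpace ℂ X]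
    [CompleteSpace X] [Nontrivial X]
    (G : Set X) (hGopen : IsOpen G) (hGconn : IsConnected G)
    (hGbdd : Bornology.IsBounded G)
    (hGbal : ∀ z : ℂ, ‖z‖ ≤ 1 → z • G ⊆ G)
    (r₀ : ℝ) (hr₀ : 1 / 3 < r₀) (hr₀' : r₀ < 1) :
    ∃ (f : X → ℂ) (p : FormalMultilinearSeries ℂ X ℂ),
      DifferentiableOn ℂ f G ∧ Set.MapsTo f G {z : ℂ | 0 < z.re} ∧
      HasFPowerSeriesAt f p 0 ∧
      ∃ x ∈ (r₀ : ℂ) • G,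
        Summable (fun m : ℕ => ‖p (m + 1) (fun _ => x)‖) ∧
        (f 0).re < ∑' m : ℕ, ‖p (m + 1) (fun _ => x)‖ :=
  bohr_halfPlane_sharp_general G hGopen hGconn hGbdd hGbal r₀ hr₀ hr₀'
end

section
/- Let X be a complex Banach space, G ⊆ X a bounded balanced domain, and f : G → ℂ a holomorphic function whose values lie in the punctured unit disk 𝔻₀ = {z ∈ ℂ : 0 < |z| < 1}, with power series expansion f(x) = f(0) + Σ_{m≥1} (1/m!) D^m f(0)(x^m) in a neighbourhood of the origin. Then for every x ∈ (1/3)·G one has Σ_{m≥1} |(1/m!) D^m f(0)(x^m)| ≤ 1. -/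
open scoped Pointwise NNReal ENNReal

/-- Bohr's theorem for holomorphic maps from a bounded balanced domain `G` in a
complex Banach space into the punctured unit disk `𝔻₀ = {z : 0 < |z| < 1}`:
for `x ∈ (1/3)·G`, the Bohr sum of the nonconstant terms is at most `1`. -/
theorem bohr_puncturedDisk {X : Type*} [NormedAddCommGroup X] [NormedSpace ℂ X]
    [CompleteSpace X]
    (G : Set X) (hGopen : IsOpen G) (hGconn : IsConnected G)
    (hGbdd : Bornology.IsBounded G)
    (hGbal : ∀ z : ℂ, ‖z‖ ≤ 1 → z • G ⊆ G)
    (f : X → ℂ) (hf : DifferentiableOn ℂ f G)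
    (hmaps : Set.MapsTo f G {z : ℂ | 0 < ‖z‖ ∧ ‖z‖ < 1})
    (p : FormalMultilinearSeries ℂ X ℂ) (hp : HasFPowerSeriesAt f p 0)
    (x : X) (hx : x ∈ (1 / 3 : ℂ) • G) :
    Summable (fun m : ℕ => ‖p (m + 1) (fun _ => x)‖) ∧
      ∑' m : ℕ, ‖p (m + 1) (fun _ => x)‖ ≤ 1 := by
  rw [Set.mem_smul_set] at hx
  obtain ⟨y, hyG, rfl⟩ := hx
  have hmem : ∀ z : ℂ, ‖z‖ ≤ 1 → z • y ∈ G := fun z hz =>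
    hGbal z hz ⟨y, hyG, rfl⟩
  set g : ℂ → ℂ := fun z => f (z • y) with hgdef
  have hgd : ∀ z : ℂ, ‖z‖ ≤ 1 → DifferentiableAt ℂ g z := by
    intro z hz
    have h1 : DifferentiableAt ℂ f (z • y) :=
      hf.differentiableAt (hGopen.mem_nhds (hmem z hz))
    exact h1.comp z ((differentiable_id.smul_const y) z)
  -- Cauchy power series on radius 2/3
  have hRc : (((2/3 : ℝ≥0) : ℝ)) = 2/3 := by norm_num
  have hgdon : DifferentiableOn ℂ g (Metric.closedBall 0 ((2/3 : ℝ≥0) : ℝ)) := by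
    intro z hz
    refine (hgd z ?_).differentiableWithinAt
    rw [Metric.mem_closedBall, dist_zero_right, hRc] at hz
    linarith
  have hq : HasFPowerSeriesOnBall g (cauchyPowerSeries g 0 ((2/3 : ℝ≥0) : ℝ)) 0 (2/3 : ℝ≥0) :=
    hgdon.hasFPowerSeriesOnBall (by norm_num)
  set q := cauchyPowerSeries g 0 ((2/3 : ℝ≥0) : ℝ) with hqdef
  -- coefficient bound ‖q n‖ ≤ (3/2)^n
  have hgle : ∀ z : ℂ, ‖z‖ ≤ 1 → ‖g z‖ ≤ 1 := by
    intro z hz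
    have := (hmaps (hmem z hz)).2
    simpa [hgdef] using this.le
  have hcont : ContinuousOn (fun θ : ℝ => ‖g (circleMap 0 ((2/3 : ℝ≥0) : ℝ) θ)‖)
      (Set.uIcc 0 (2 * Real.pi)) := by
    apply ContinuousOn.norm
    apply ContinuousOn.comp (t := Metric.closedBall (0:ℂ) 1)
      (fun z hz => (hgd z (by
        rw [Metric.mem_closedBall, dist_zero_right] at hz; exact hz)).continuousAt.continuousWithinAt)
      ((continuous_circleMap 0 _).continuousOn)
    intro θ _
    simp only [Metric.mem_closedBall, dist_zero_right,
      norm_circleMap_zero, hRc, abs_of_nonneg (by norm_num : (0:ℝ) ≤ 2/3)]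
    norm_num
  have hInt : IntervalIntegrable (fun θ : ℝ => ‖g (circleMap 0 ((2/3 : ℝ≥0) : ℝ) θ)‖)
      MeasureTheory.volume 0 (2 * Real.pi) := hcont.intervalIntegrable
  have hbound : ∀ n : ℕ, ‖q n‖ ≤ (3/2 : ℝ) ^ n := by
    intro n
    have h1 := norm_cauchyPowerSeries_le g 0 ((2/3 : ℝ≥0) : ℝ) n
    have hint : (∫ θ : ℝ in (0)..2 * Real.pi, ‖g (circleMap 0 ((2/3 : ℝ≥0) : ℝ) θ)‖)
        ≤ ∫ _ : ℝ in (0)..2 * Real.pi, (1:ℝ) := by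
      apply intervalIntegral.integral_mono_on Real.two_pi_pos.le hInt intervalIntegrable_const
      intro θ _
      apply hgle
      simp only [norm_circleMap_zero, hRc,
        abs_of_nonneg (by norm_num : (0:ℝ) ≤ 2/3)]
      norm_num
    rw [intervalIntegral.integral_const, smul_eq_mul, mul_one, sub_zero] at hint
    calc ‖q n‖ ≤ ((2 * Real.pi)⁻¹ *
          ∫ θ : ℝ in (0)..2 * Real.pi, ‖g (circleMap 0 ((2/3 : ℝ≥0) : ℝ) θ)‖) *
          |((2/3 : ℝ≥0) : ℝ)|⁻¹ ^ n := h1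
      _ ≤ ((2 * Real.pi)⁻¹ * (2 * Real.pi)) * |((2/3 : ℝ≥0) : ℝ)|⁻¹ ^ n := by
          apply mul_le_mul_of_nonneg_right
          · exact mul_le_mul_of_nonneg_left hint (by positivity)
          · positivity
      _ = (3/2 : ℝ) ^ n := by
          rw [inv_mul_cancel₀ (by positivity), one_mul, hRc,
            abs_of_nonneg (by norm_num : (0:ℝ) ≤ 2/3)]
          norm_num
  -- the power series of g at 0 coming from p
  set q' : FormalMultilinearSeries ℂ ℂ ℂ := fun m =>
    ContinuousMultilinearMap.mkPiRing ℂ (Fin m) (p m fun _ => y) with hq'def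
  have hq'norm : ∀ n : ℕ, ‖q' n‖ = ‖p n fun _ => y‖ := fun n =>
    ContinuousMultilinearMap.norm_mkPiRing _
  obtain ⟨r, hr⟩ := hp
  obtain ⟨t, ht0, htr⟩ := ENNReal.lt_iff_exists_nnreal_btwn.1 hr.r_pos
  have ht0' : (0 : ℝ≥0) < t := by exact_mod_cast ht0
  set M : ℝ≥0 := ‖y‖₊ + 1 with hMdef
  have hM : (0 : ℝ≥0) < M := by positivity
  set ρ : ℝ≥0 := t / M with hρdef
  have hρ : (0 : ℝ≥0) < ρ := by positivity
  have hρM : ρ * M = t := div_mul_cancel₀ _ hM.ne'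
  have hq' : HasFPowerSeriesOnBall g q' 0 ρ := by
    obtain ⟨C, hC, hCb⟩ := p.norm_mul_pow_le_of_lt_radius (htr.trans_le hr.r_le)
    refine ⟨q'.le_radius_of_bound C fun n => ?_, by exact_mod_cast hρ, ?_⟩
    · rw [hq'norm n]
      have h2 : ‖p n fun _ => y‖ ≤ ‖p n‖ * ‖y‖ ^ n := by
        have := (p n).le_opNorm (fun _ => y)
        simpa [Finset.prod_const] using this
      calc ‖p n fun _ => y‖ * (ρ : ℝ) ^ n ≤ (‖p n‖ * ‖y‖ ^ n) * (ρ : ℝ) ^ n := by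
            apply mul_le_mul_of_nonneg_right h2 (by positivity)
        _ = ‖p n‖ * (‖y‖ * (ρ : ℝ)) ^ n := by ring
        _ ≤ ‖p n‖ * ((t : ℝ)) ^ n := by
            apply mul_le_mul_of_nonneg_left _ (norm_nonneg _)
            apply pow_le_pow_left₀ (by positivity)
            calc ‖y‖ * (ρ : ℝ) ≤ (M : ℝ) * (ρ : ℝ) := by
                  apply mul_le_mul_of_nonneg_right _ (by positivity)
                  rw [hMdef]; push_cast; simp [← coe_nnnorm]
              _ = (t : ℝ) := by rw [mul_comm]; exact_mod_cast congrArg NNReal.toReal hρM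
        _ ≤ C := hCb n
    · intro z hz
      rw [mem_emetric_ball_zero_iff] at hz
      have hz' : ‖z‖₊ < ρ := by exact_mod_cast hz
      have hmem' : z • y ∈ Metric.eball (0 : X) r := by
        rw [mem_emetric_ball_zero_iff]
        have h3 : ‖z • y‖₊ < t := by
          calc ‖z • y‖₊ = ‖z‖₊ * ‖y‖₊ := by rw [nnnorm_smul]
            _ ≤ ‖z‖₊ * M := by
                apply mul_le_mul_right
                rw [hMdef]; exact le_add_of_nonneg_right zero_le_one
            _ < ρ * M := by exact mul_lt_mul_of_pos_right hz' hM
            _ = t := hρM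
        calc (‖z • y‖₊ : ℝ≥0∞) < (t : ℝ≥0∞) := by exact_mod_cast h3
          _ < r := htr
      have h4 := hr.hasSum hmem'
      have h5 : (fun n => q' n fun _ => z) = fun n => p n fun _ => z • y := by
        funext n
        rw [hq'def]
        simp only [ContinuousMultilinearMap.mkPiRing_apply]
        rw [← ContinuousMultilinearMap.map_smul_univ]
      rw [h5]
      simpa using h4
  have huniq : q' = q := hq'.hasFPowerSeriesAt.eq_formalMultilinearSeries hq.hasFPowerSeriesAt
  have hkey : ∀ m : ℕ, ‖p m fun _ => y‖ ≤ (3/2 : ℝ) ^ m := by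
    intro m
    rw [← hq'norm m, huniq]
    exact hbound m
  have hle : ∀ m : ℕ, ‖p (m + 1) (fun _ => (1/3 : ℂ) • y)‖ ≤ (1/2 : ℝ) ^ (m + 1) := by
    intro m
    have h6 : p (m + 1) (fun _ => (1/3 : ℂ) • y)
        = (∏ _i : Fin (m + 1), (1/3 : ℂ)) • p (m + 1) (fun _ => y) :=
      ((p (m + 1)).map_smul_univ (fun _ => (1/3 : ℂ)) (fun _ => y))
    rw [h6, norm_smul]
    have h7 : ‖∏ _i : Fin (m + 1), (1/3 : ℂ)‖ = (1/3 : ℝ) ^ (m + 1) := by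
      rw [Finset.prod_const]
      simp [norm_pow]
    rw [h7]
    calc (1/3 : ℝ) ^ (m + 1) * ‖p (m + 1) fun _ => y‖
        ≤ (1/3 : ℝ) ^ (m + 1) * (3/2 : ℝ) ^ (m + 1) := by
          apply mul_le_mul_of_nonneg_left (hkey (m + 1)) (by positivity)
      _ = (1/2 : ℝ) ^ (m + 1) := by rw [← mul_pow]; norm_num
  have hsum2 : Summable (fun m : ℕ => (1/2 : ℝ) ^ (m + 1)) := by
    apply Summable.comp_injective (summable_geometric_of_lt_one (by norm_num) (by norm_num))
      (add_left_injective 1)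
  have hsum : Summable (fun m : ℕ => ‖p (m + 1) (fun _ => (1/3 : ℂ) • y)‖) :=
    Summable.of_nonneg_of_le (fun m => norm_nonneg _) hle hsum2
  refine ⟨hsum, ?_⟩
  have h8 : ∑' m : ℕ, (1/2 : ℝ) ^ (m + 1) = 1 := by
    have : ∑' m : ℕ, (1/2 : ℝ) ^ (m + 1) = ∑' m : ℕ, (1/2 : ℝ) * (1/2 : ℝ) ^ m := by
      congr 1; funext m; ring
    rw [this, tsum_mul_left, tsum_geometric_of_lt_one (by norm_num) (by norm_num)]
    norm_num
  calc ∑' m : ℕ, ‖p (m + 1) (fun _ => (1/3 : ℂ) • y)‖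
      ≤ ∑' m : ℕ, (1/2 : ℝ) ^ (m + 1) := Summable.tsum_le_tsum hle hsum hsum2
    _ = 1 := h8
end

section
/- Let X be a nontrivial complex Banach space and G ⊆ X a bounded balanced domain. For every r₀ with 3 − 2√2 < r₀ < 1 there exist a holomorphic function f : G → ℂ with values in the slit region T = ℂ \ (−∞, 0], with f(0) > 0 and power series expansion f(x) = f(0) + Σ_{m≥1} (1/m!) D^m f(0)(x^m) at 0, and a point x ∈ r₀·G such that Σ_{m≥1} |(1/m!) D^m f(0)(x^m)| > f(0). Hence the constant 3 − 2√2 in the Bohr inequality for H(G, T) is best possible. -/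
/-!
The map `w ↦ ((1 - w) / (1 + w))²` sends the unit disc into the slit plane and has the expansion
`1 + ∑_{n ≥ 1} 4n (-1)ⁿ wⁿ`, whose Bohr sum at `|w| = t` is `4t / (1 - t)²`; this exceeds `1`
exactly when `t > 3 - 2√2`. Rescaling a Hahn–Banach functional by its supremum on the bounded set
`G` gives a continuous linear functional `φ` with `|φ| < 1` on `G` and `|φ u| > (3 - 2√2) / r₀`
for some `u ∈ G`; then `f = ((1 - φ) / (1 + φ))²` and the point `r₀ u` do the job.
-/

open scoped Pointwise Topology
open Complex FormalMultilinearSeries Bornology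

namespace Complex

lemma sq_mem_slitPlane_of_re_pos {z : ℂ} (hz : 0 < z.re) : z ^ 2 ∈ slitPlane := by
  rw [mem_slitPlane_iff, sq, mul_re, mul_im]
  rcases eq_or_ne z.im 0 with him | him
  · left
    rw [him]
    nlinarith
  · right
    rw [mul_comm z.im, ← two_mul]
    exact mul_ne_zero two_ne_zero (mul_ne_zero hz.ne' him)

lemma re_one_sub_div_one_add_pos {w : ℂ} (hw : ‖w‖ < 1) : 0 < ((1 - w) / (1 + w)).re := by
  have hw0 : 1 + w ≠ 0 := slitPlane_ne_zero (mem_slitPlane_of_norm_lt_one hw)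
  have hnormSq : normSq w < 1 := by
    rw [normSq_eq_norm_sq]; nlinarith [norm_nonneg w]
  rw [div_re, ← add_div]
  refine div_pos ?_ (normSq_pos.2 hw0)
  rw [normSq_apply] at hnormSq
  simp only [sub_re, add_re, sub_im, add_im, one_re, one_im]
  nlinarith

end Complex

noncomputable def diskToSlitPlane (w : ℂ) : ℂ := ((1 - w) / (1 + w)) ^ 2

def diskToSlitPlaneCoeff (n : ℕ) : ℂ := if n = 0 then 1 else 4 * n * (-1) ^ n

lemma diskToSlitPlane_mem_slitPlane {w : ℂ} (hw : ‖w‖ < 1) : diskToSlitPlane w ∈ slitPlane :=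
  sq_mem_slitPlane_of_re_pos (re_one_sub_div_one_add_pos hw)

lemma norm_diskToSlitPlaneCoeff_succ (n : ℕ) : ‖diskToSlitPlaneCoeff (n + 1)‖ = 4 * (n + 1) := by
  rw [diskToSlitPlaneCoeff, if_neg n.succ_ne_zero, norm_mul, norm_pow, norm_neg, norm_one, one_pow,
    mul_one, norm_mul, RCLike.norm_ofNat, norm_natCast]
  push_cast
  ring

lemma hasSum_diskToSlitPlaneCoeff_mul_pow {w : ℂ} (hw : ‖w‖ < 1) :
    HasSum (fun n ↦ diskToSlitPlaneCoeff n * w ^ n) (diskToSlitPlane w) := by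
  have hw0 : 1 + w ≠ 0 := slitPlane_ne_zero (mem_slitPlane_of_norm_lt_one hw)
  have H := ((hasSum_coe_mul_geometric_of_norm_lt_one (𝕜 := ℂ) (r := -w)
    (by rwa [norm_neg])).mul_left 4).add (hasSum_ite_eq 0 (1 : ℂ))
  have e : (fun n ↦ diskToSlitPlaneCoeff n * w ^ n)
      = fun n : ℕ ↦ 4 * ((n : ℂ) * (-w) ^ n) + if n = 0 then 1 else 0 := by
    funext n
    rcases eq_or_ne n 0 with rfl | hn
    · simp [diskToSlitPlaneCoeff]
    · rw [diskToSlitPlaneCoeff, if_neg hn, if_neg hn, neg_pow]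
      ring
  rw [e, show diskToSlitPlane w = 4 * (-w / (1 - -w) ^ 2) + 1 by
    rw [diskToSlitPlane, sub_neg_eq_add]
    field_simp
    ring]
  exact H

lemma hasSum_norm_diskToSlitPlaneCoeff_succ_mul_pow {t : ℝ} (ht₀ : 0 ≤ t) (ht₁ : t < 1) :
    HasSum (fun n ↦ ‖diskToSlitPlaneCoeff (n + 1)‖ * t ^ (n + 1)) (4 * t / (1 - t) ^ 2) := by
  have H := (hasSum_nat_add_iff' 1).2 <| hasSum_coe_mul_geometric_of_norm_lt_one (𝕜 := ℝ)
    (show ‖t‖ < 1 by rwa [Real.norm_of_nonneg ht₀])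
  have e : (fun n ↦ ‖diskToSlitPlaneCoeff (n + 1)‖ * t ^ (n + 1))
      = fun n ↦ 4 * (((n + 1 : ℕ) : ℝ) * t ^ (n + 1)) := by
    funext n
    rw [norm_diskToSlitPlaneCoeff_succ]
    push_cast
    ring
  rw [e, show 4 * t / (1 - t) ^ 2 = 4 * (t / (1 - t) ^ 2 - ∑ i ∈ Finset.range 1, (i : ℝ) * t ^ i)
    by simp [mul_div_assoc]]
  exact H.mul_left 4

lemma one_lt_four_mul_div_one_sub_sq {t : ℝ} (ht : 3 - 2 * √2 < t) (ht' : t < 1) :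
    1 < 4 * t / (1 - t) ^ 2 := by
  have hsqrt : √2 ^ 2 = 2 := Real.sq_sqrt zero_le_two
  have hsqrt_pos : 0 < √2 := by positivity
  rw [one_lt_div (by nlinarith)]
  -- `4t - (1 - t)² = (t - (3 - 2√2)) (3 + 2√2 - t)`
  nlinarith [mul_pos (sub_pos.2 ht) (show 0 < 3 + 2 * √2 - t by linarith)]

lemma one_le_radius_diskToSlitPlaneCoeff : 1 ≤ (ofScalars ℂ diskToSlitPlaneCoeff).radius := by
  refine ENNReal.le_of_forall_nnreal_lt fun r hr ↦ le_radius_of_summable_norm _ ?_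
  simp only [ofScalars_norm]
  exact (summable_nat_add_iff 1).1
    (hasSum_norm_diskToSlitPlaneCoeff_succ_mul_pow r.2 (by exact_mod_cast hr)).summable

lemma hasFPowerSeriesOnBall_diskToSlitPlane :
    HasFPowerSeriesOnBall diskToSlitPlane (ofScalars ℂ diskToSlitPlaneCoeff) 0 1 where
  r_le := one_le_radius_diskToSlitPlaneCoeff
  r_pos := one_pos
  hasSum {w} hw := by
    rw [ofScalars_apply_eq', zero_add]
    exact hasSum_diskToSlitPlaneCoeff_mul_pow
      (by simpa [← ENNReal.coe_one, Metric.eball_coe] using hw)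

lemma differentiableOn_diskToSlitPlane : DifferentiableOn ℂ diskToSlitPlane (Metric.ball 0 1) := by
  simpa [← ENNReal.coe_one, Metric.eball_coe] using
    hasFPowerSeriesOnBall_diskToSlitPlane.differentiableOn

lemma IsOpen.exists_mem_ne {X : Type*} [TopologicalSpace X] {G : Set X} (hG : IsOpen G)
    (hne : G.Nonempty) (x : X) [(𝓝[≠] x).NeBot] : ∃ y ∈ G, y ≠ x := by
  by_contra! h
  exact not_isOpen_singleton x (Set.eq_singleton_iff_nonempty_unique_mem.2 ⟨hne, h⟩ ▸ hG)

section Functional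

variable {𝕜 X : Type*} [RCLike 𝕜] [NormedAddCommGroup X] [NormedSpace 𝕜 X]

lemma exists_clm_isLUB_norm_image {G : Set X} (hG : IsBounded G) {y : X} (hyG : y ∈ G)
    (hy : y ≠ 0) : ∃ (φ : X →L[𝕜] 𝕜) (a : ℝ), 0 < a ∧ IsLUB ((fun x ↦ ‖φ x‖) '' G) a := by
  obtain ⟨φ, hφ, hφy⟩ := exists_dual_vector'' 𝕜 y
  obtain ⟨R, hR⟩ := isBounded_iff_forall_norm_le.1 hG
  have hbdd : BddAbove ((fun x ↦ ‖φ x‖) '' G) := by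
    refine ⟨R, Set.forall_mem_image.2 fun x hx ↦ ?_⟩
    exact (φ.le_of_opNorm_le hφ x).trans (by simpa using hR x hx)
  refine ⟨φ, _, ?_, isLUB_csSup ⟨_, Set.mem_image_of_mem _ hyG⟩ hbdd⟩
  calc 0 < ‖φ y‖ := by simpa [hφy] using hy
    _ ≤ _ := le_csSup hbdd (Set.mem_image_of_mem _ hyG)

lemma exists_clm_norm_lt_one_and_lt_norm {G : Set X} (hG : IsBounded G) {y : X} (hyG : y ∈ G)
    (hy : y ≠ 0) {s : ℝ} (hs : s < 1) :
    ∃ φ : X →L[𝕜] 𝕜, (∀ x ∈ G, ‖φ x‖ < 1) ∧ ∃ u ∈ G, s < ‖φ u‖ := by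
  obtain ⟨φ, a, ha, hlub⟩ := exists_clm_isLUB_norm_image (𝕜 := 𝕜) hG hyG hy
  obtain ⟨β, hβs, hβ⟩ := exists_between (max_lt hs one_pos)
  have hβ₀ : 0 < β := (le_max_right s 0).trans_lt hβs
  have hsβ : s < β := (le_max_left s 0).trans_lt hβs
  obtain ⟨_, ⟨u, huG, rfl⟩, hu, -⟩ := hlub.exists_between (show a * (s / β) < a by
    nlinarith [(div_lt_one hβ₀).2 hsβ])
  have hnorm : ∀ x, ‖(((β / a : ℝ) : 𝕜) • φ) x‖ = β / a * ‖φ x‖ := fun x ↦ by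
    rw [_root_.smul_apply, norm_smul, RCLike.norm_ofReal, abs_of_pos (by positivity)]
  refine ⟨((β / a : ℝ) : 𝕜) • φ, fun x hx ↦ ?_, u, huG, ?_⟩
  · rw [hnorm]
    calc β / a * ‖φ x‖ ≤ β / a * a := by gcongr; exact hlub.1 (Set.mem_image_of_mem _ hx)
      _ = β := div_mul_cancel₀ β ha.ne'
      _ < 1 := hβ
  · rw [hnorm]
    calc s = β / a * (a * (s / β)) := by field_simp
      _ < β / a * ‖φ u‖ := by gcongr

end Functional

section Composition

variable {X : Type*} [NormedAddCommGroup X] [NormedSpace ℂ X] (φ : X →L[ℂ] ℂ)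

lemma hasFPowerSeriesAt_diskToSlitPlane_comp :
    HasFPowerSeriesAt (diskToSlitPlane ∘ φ)
      ((ofScalars ℂ diskToSlitPlaneCoeff).compContinuousLinearMap φ) 0 := by
  have h := hasFPowerSeriesOnBall_diskToSlitPlane.hasFPowerSeriesAt
  rw [← map_zero φ] at h
  exact h.compContinuousLinearMap

lemma norm_ofScalars_compContinuousLinearMap_apply (c : ℕ → ℂ) (n : ℕ) (x : X) :
    ‖(ofScalars ℂ c).compContinuousLinearMap φ n (fun _ ↦ x)‖ = ‖c n‖ * ‖φ x‖ ^ n := by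
  simp [compContinuousLinearMap, mul_comm]

end Composition

theorem bohr_slitPlane_sharp_general {X : Type*} [NormedAddCommGroup X] [NormedSpace ℂ X]
    [Nontrivial X]
    (G : Set X) (hGopen : IsOpen G) (hGconn : IsConnected G)
    (hGbdd : Bornology.IsBounded G)
    (r₀ : ℝ) (hr₀ : 3 - 2 * Real.sqrt 2 < r₀) (hr₀' : r₀ < 1) :
    ∃ (f : X → ℂ) (p : FormalMultilinearSeries ℂ X ℂ),
      DifferentiableOn ℂ f G ∧ Set.MapsTo f G Complex.slitPlane ∧
      (f 0).im = 0 ∧ 0 < (f 0).re ∧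
      HasFPowerSeriesAt f p 0 ∧
      ∃ x ∈ (r₀ : ℂ) • G,
        Summable (fun m : ℕ => ‖p (m + 1) (fun _ => x)‖) ∧
        (f 0).re < ∑' m : ℕ, ‖p (m + 1) (fun _ => x)‖ := by
  have hr₀pos : 0 < r₀ := by
    nlinarith [Real.sq_sqrt zero_le_two, Real.sqrt_nonneg 2]
  obtain ⟨y, hyG, hy⟩ := hGopen.exists_mem_ne hGconn.nonempty 0
  obtain ⟨φ, hφG, u, huG, hu⟩ := exists_clm_norm_lt_one_and_lt_norm (𝕜 := ℂ) hGbdd hyG hy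
    ((div_lt_one hr₀pos).2 hr₀)
  set t := r₀ * ‖φ u‖
  have ht : 3 - 2 * √2 < t := (div_lt_iff₀' hr₀pos).1 hu
  have ht' : t < 1 := by nlinarith [hφG u huG]
  have hφx : ‖φ ((r₀ : ℂ) • u)‖ = t := by
    rw [map_smul, norm_smul, norm_real, Real.norm_of_nonneg hr₀pos.le]
  have hsum : HasSum (fun m ↦ ‖(ofScalars ℂ diskToSlitPlaneCoeff).compContinuousLinearMap φ (m + 1)
      (fun _ ↦ (r₀ : ℂ) • u)‖) (4 * t / (1 - t) ^ 2) := by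
    simpa only [norm_ofScalars_compContinuousLinearMap_apply, hφx]
      using hasSum_norm_diskToSlitPlaneCoeff_succ_mul_pow (by positivity) ht'
  have hf0 : (diskToSlitPlane ∘ φ) 0 = 1 := by simp [diskToSlitPlane]
  refine ⟨diskToSlitPlane ∘ φ, _, ?_, fun x hx ↦ diskToSlitPlane_mem_slitPlane (hφG x hx),
    by rw [hf0, one_im], by rw [hf0, one_re]; exact one_pos,
    hasFPowerSeriesAt_diskToSlitPlane_comp φ, _, Set.smul_mem_smul_set huG, hsum.summable, ?_⟩
  · exact differentiableOn_diskToSlitPlane.comp φ.differentiableOn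
      fun x hx ↦ mem_ball_zero_iff.2 (hφG x hx)
  · rw [hsum.tsum_eq, hf0, one_re]
    exact one_lt_four_mul_div_one_sub_sq ht ht'

/-- Sharpness of the constant `3 - 2√2` in Bohr's theorem for holomorphic maps
from a bounded balanced domain `G` of a nontrivial complex Banach space into the
slit region `T = ℂ \ (-∞, 0]`: for any `3 - 2√2 < r₀ < 1` there are `f ∈ H(G, T)`
with `f(0) > 0` and `x ∈ r₀·G` whose Bohr sum of nonconstant terms exceeds `f(0)`. -/
theorem bohr_slitPlane_sharp {X : Type*} [NormedAddCommGroup X] [NormedSpace ℂ X]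
    [CompleteSpace X] [Nontrivial X]
    (G : Set X) (hGopen : IsOpen G) (hGconn : IsConnected G)
    (hGbdd : Bornology.IsBounded G)
    (hGbal : ∀ z : ℂ, ‖z‖ ≤ 1 → z • G ⊆ G)
    (r₀ : ℝ) (hr₀ : 3 - 2 * Real.sqrt 2 < r₀) (hr₀' : r₀ < 1) :
    ∃ (f : X → ℂ) (p : FormalMultilinearSeries ℂ X ℂ),
      DifferentiableOn ℂ f G ∧ Set.MapsTo f G Complex.slitPlane ∧
      (f 0).im = 0 ∧ 0 < (f 0).re ∧
      HasFPowerSeriesAt f p 0 ∧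
      ∃ x ∈ (r₀ : ℂ) • G,
        Summable (fun m : ℕ => ‖p (m + 1) (fun _ => x)‖) ∧
        (f 0).re < ∑' m : ℕ, ‖p (m + 1) (fun _ => x)‖ :=
  bohr_slitPlane_sharp_general G hGopen hGconn hGbdd r₀ hr₀ hr₀'
end

section
/- Let X be a nontrivial complex Banach space and G ⊆ X a bounded balanced domain. For every r₀ with 1/3 < r₀ < 1 there exist a holomorphic function f : G → ℂ with values in {z ∈ ℂ : |z| > 1} (with power series expansion f(x) = f(0) + Σ_{m≥1} (1/m!) D^m f(0)(x^m) at 0) and a point x ∈ r₀·G such that λ( Σ_{m≥0} |(1/m!) D^m f(0)(x^m)| , |f(0)| ) > λ( |f(0)|, 1 ), where λ(a,b) = |a − b| / (√(1+|a|²)·√(1+|b|²)). Hence the constant 1/3 in the spherical Bohr inequality for H(G, {|z| > 1}) is best possible. -/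
/-!
The extremal functions are `f = φₐ ∘ L`, where `φₐ(z) = (1 - a z)/(a - z)` (`invBlaschke a`) is the
reciprocal of a disk automorphism (so `|φₐ| > 1` on the unit disk) and `L` is a Hahn–Banach
functional, scaled so that `|L| < a` on `G` while `L(r₀ x₀) = a² r₀` for a point `x₀ ∈ G` of
almost maximal norm. All Taylor coefficients of `φₐ` are positive, so the Bohr sum at `r₀ x₀` is
`φₐ(t)` with `t = a² r₀`. Squaring out the spherical distances, `λ(φₐ(t), 1/a) > λ(1/a, 1)` becomes
`(t + 1)((1 + 4a + a²) t - (1 + a²)) > 0`; as `a → 1` this is `t > 1/3`.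
-/

open scoped Pointwise

/-- The spherical (chordal) distance between two (real) numbers, viewed as points
of the extended complex plane: `λ(a, b) = |a - b| / (√(1 + a²)·√(1 + b²))`. -/
noncomputable def sphericalDist (a b : ℝ) : ℝ :=
  |a - b| / (Real.sqrt (1 + a ^ 2) * Real.sqrt (1 + b ^ 2))

open scoped Topology
open Filter FormalMultilinearSeries

lemma sphericalDist_sq (x y : ℝ) :
    sphericalDist x y ^ 2 = (x - y) ^ 2 / ((1 + x ^ 2) * (1 + y ^ 2)) := by
  rw [sphericalDist, div_pow, mul_pow, sq_abs, Real.sq_sqrt (by positivity),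
    Real.sq_sqrt (by positivity)]

lemma sphericalDist_nonneg (x y : ℝ) : 0 ≤ sphericalDist x y := by
  unfold sphericalDist; positivity

lemma sphericalDist_lt_sphericalDist_iff {x y u v : ℝ} :
    sphericalDist x y < sphericalDist u v ↔
      (x - y) ^ 2 * ((1 + u ^ 2) * (1 + v ^ 2)) < (u - v) ^ 2 * ((1 + x ^ 2) * (1 + y ^ 2)) := by
  rw [← pow_lt_pow_iff_left₀ (sphericalDist_nonneg x y) (sphericalDist_nonneg u v) two_ne_zero,
    sphericalDist_sq, sphericalDist_sq, div_lt_div_iff₀ (by positivity) (by positivity)]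

lemma sphericalDist_inv_one_lt {a t : ℝ} (ht : 0 < t) (hta : t < a) (ha : a < 1)
    (h : 1 + a ^ 2 < (1 + 4 * a + a ^ 2) * t) :
    sphericalDist (1 / a) 1 < sphericalDist ((1 - a * t) / (a - t)) (1 / a) := by
  have ha0 : 0 < a := ht.trans hta
  have hat : 0 < a - t := sub_pos.mpr hta
  rw [sphericalDist_lt_sphericalDist_iff]
  field_simp
  have key : 0 < (1 - a) ^ 2 * (1 + a ^ 2) * (t + 1) * ((1 + 4 * a + a ^ 2) * t - (1 + a ^ 2)) :=
    mul_pos (mul_pos (by nlinarith) (by linarith)) (by linarith)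
  nlinarith [key]

noncomputable def invBlaschke (a : ℝ) (z : ℂ) : ℂ := (1 - a * z) / (a - z)

-- `φₐ(z) = a + (1 - a²)/(a - z)`, and the second term is a geometric series in `z / a`.
noncomputable def invBlaschkeCoeff (a : ℝ) (m : ℕ) : ℝ :=
  (1 - a ^ 2) / a ^ (m + 1) + if m = 0 then a else 0

noncomputable def invBlaschkeSeries (a : ℝ) : FormalMultilinearSeries ℂ ℂ ℂ :=
  ofScalars ℂ fun m => (invBlaschkeCoeff a m : ℂ)

lemma invBlaschkeCoeff_nonneg {a : ℝ} (ha0 : 0 < a) (ha1 : a ≤ 1) (m : ℕ) :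
    0 ≤ invBlaschkeCoeff a m := by
  have : 0 ≤ 1 - a ^ 2 := by nlinarith
  unfold invBlaschkeCoeff
  positivity

lemma invBlaschke_zero (a : ℝ) : invBlaschke a 0 = (1 / a : ℝ) := by
  simp [invBlaschke]

lemma differentiableAt_invBlaschke {a : ℝ} {z : ℂ} (hz : z ≠ a) :
    DifferentiableAt ℂ (invBlaschke a) z :=
  (by fun_prop : DifferentiableAt ℂ (fun z : ℂ => 1 - a * z) z).div (by fun_prop)
    (sub_ne_zero.mpr hz.symm)

lemma one_lt_norm_invBlaschke {a : ℝ} (ha : |a| < 1) {z : ℂ} (hz : ‖z‖ < 1) (hza : z ≠ a) :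
    1 < ‖invBlaschke a z‖ := by
  have hne : (a : ℂ) - z ≠ 0 := sub_ne_zero.mpr hza.symm
  have key : ‖1 - a * z‖ ^ 2 - ‖a - z‖ ^ 2 = (1 - a ^ 2) * (1 - ‖z‖ ^ 2) := by
    simp only [← Complex.normSq_eq_norm_sq, Complex.normSq_apply]
    simp only [Complex.sub_re, Complex.sub_im, Complex.mul_re, Complex.mul_im, Complex.ofReal_re,
      Complex.ofReal_im, Complex.one_re, Complex.one_im]
    ring
  rw [invBlaschke, norm_div, one_lt_div (norm_pos_iff.mpr hne)]
  have : 0 < (1 - a ^ 2) * (1 - ‖z‖ ^ 2) := by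
    have := sq_lt_one_iff_abs_lt_one a |>.mpr ha
    apply mul_pos <;> nlinarith [norm_nonneg z]
  nlinarith [norm_nonneg ((a:ℂ) - z), norm_nonneg (1 - (a:ℂ) * z)]

lemma hasSum_invBlaschkeCoeff {a : ℝ} (ha : 0 < a) {z : ℂ} (hz : ‖z‖ < a) :
    HasSum (fun m => (invBlaschkeCoeff a m : ℂ) * z ^ m) (invBlaschke a z) := by
  have haC : (a : ℂ) ≠ 0 := Complex.ofReal_ne_zero.mpr ha.ne'
  have hza : ‖z / a‖ < 1 := by
    rwa [norm_div, Complex.norm_of_nonneg ha.le, div_lt_one ha]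
  have hne : (a : ℂ) - z ≠ 0 := by
    rintro h
    rw [← sub_eq_zero.mp h, Complex.norm_of_nonneg ha.le] at hz
    exact hz.false
  have hgeom := ((hasSum_geometric_of_norm_lt_one hza).mul_left ((1 - a ^ 2) / a : ℂ)).add
    (hasSum_ite_eq 0 (a : ℂ))
  have hval : invBlaschke a z = (1 - a ^ 2) / a * (1 - z / a)⁻¹ + a := by
    unfold invBlaschke
    field_simp
    ring
  rw [hval]
  refine hgeom.congr_fun fun m => ?_
  rcases eq_or_ne m 0 with rfl | hm
  · simp [invBlaschkeCoeff]
  · simp only [invBlaschkeCoeff, hm, if_false, add_zero]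
    push_cast
    rw [div_pow]
    field_simp
    ring

lemma hasSum_invBlaschkeCoeff_real {a t : ℝ} (ha : 0 < a) (ht : |t| < a) :
    HasSum (fun m => invBlaschkeCoeff a m * t ^ m) ((1 - a * t) / (a - t)) := by
  have := hasSum_invBlaschkeCoeff ha (z := t) (by rwa [Complex.norm_real, Real.norm_eq_abs])
  rw [← Complex.hasSum_ofReal]
  push_cast
  exact this

lemma hasFPowerSeriesOnBall_invBlaschke {a : ℝ} (ha0 : 0 < a) (ha1 : a ≤ 1) :
    HasFPowerSeriesOnBall (invBlaschke a) (invBlaschkeSeries a) 0 (ENNReal.ofReal a) where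
  r_le := ENNReal.le_of_forall_nnreal_lt fun r hr => by
    rw [← ENNReal.ofReal_coe_nnreal, ENNReal.ofReal_lt_ofReal_iff ha0] at hr
    refine le_radius_of_summable _ ?_
    simp only [invBlaschkeSeries, ofScalars_norm, Complex.norm_real, Real.norm_of_nonneg
      (invBlaschkeCoeff_nonneg ha0 ha1 _)]
    exact (hasSum_invBlaschkeCoeff_real ha0 (by rwa [NNReal.abs_eq])).summable
  r_pos := ENNReal.ofReal_pos.mpr ha0
  hasSum {y} hy := by
    rw [Metric.eball_ofReal, Metric.mem_ball, dist_zero_right] at hy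
    simpa [invBlaschkeSeries, ofScalars_apply_eq, mul_comm] using hasSum_invBlaschkeCoeff ha0 hy

lemma hasSum_norm_invBlaschkeSeries_comp_apply {X : Type*} [NormedAddCommGroup X]
    [NormedSpace ℂ X] {a t : ℝ} (ha0 : 0 < a) (ha1 : a ≤ 1) (ht0 : 0 ≤ t) (hta : t < a)
    {L : X →L[ℂ] ℂ} {x : X} (hLx : L x = t) :
    HasSum (fun m => ‖(invBlaschkeSeries a).compContinuousLinearMap L m fun _ => x‖)
      ((1 - a * t) / (a - t)) := by
  refine (hasSum_invBlaschkeCoeff_real ha0 (by rwa [abs_of_nonneg ht0])).congr_fun fun m => ?_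
  rw [compContinuousLinearMap_apply, Function.comp_def, hLx, invBlaschkeSeries,
    ofScalars_apply_eq, smul_eq_mul, norm_mul, norm_pow, Complex.norm_real, Complex.norm_real,
    Real.norm_of_nonneg (invBlaschkeCoeff_nonneg ha0 ha1 m), Real.norm_of_nonneg ht0]

lemma exists_near_one_of_one_third_lt {r₀ : ℝ} (hr₀ : 1 / 3 < r₀) :
    ∃ a : ℝ, 0 < a ∧ a < 1 ∧ 1 + a ^ 2 < (1 + 4 * a + a ^ 2) * (a ^ 2 * r₀) := by
  have hlim : ∀ᶠ a in 𝓝 (1 : ℝ), 1 + a ^ 2 < (1 + 4 * a + a ^ 2) * (a ^ 2 * r₀) :=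
    (show Continuous fun a : ℝ => 1 + a ^ 2 by fun_prop).continuousAt.eventually_lt
      (by fun_prop) (by norm_num; linarith)
  obtain ⟨a, ha, ha01⟩ :=
    ((hlim.filter_mono nhdsWithin_le_nhds).and (Ioo_mem_nhdsLT zero_lt_one)).exists
  exact ⟨a, ha01.1, ha01.2, ha⟩

lemma exists_mem_forall_mul_norm_lt_norm {X : Type*} [SeminormedAddCommGroup X] {G : Set X}
    (hG : Bornology.IsBounded G) {y₁ : X} (hy₁G : y₁ ∈ G) (hy₁ : 0 < ‖y₁‖) {a : ℝ}
    (ha0 : 0 ≤ a) (ha1 : a < 1) : ∃ x₀ ∈ G, ∀ y ∈ G, a * ‖y‖ < ‖x₀‖ := by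
  obtain ⟨C, hC⟩ := isBounded_iff_forall_norm_le.mp hG
  have hbdd : BddAbove (norm '' G) := ⟨C, Set.forall_mem_image.2 hC⟩
  have hle : ∀ y ∈ G, ‖y‖ ≤ sSup (norm '' G) := fun y hy =>
    le_csSup hbdd (Set.mem_image_of_mem _ hy)
  have hM : 0 < sSup (norm '' G) := hy₁.trans_le (hle y₁ hy₁G)
  obtain ⟨_, ⟨x₀, hx₀G, rfl⟩, hx₀⟩ := exists_lt_of_lt_csSup (Set.Nonempty.image _ ⟨y₁, hy₁G⟩)
    (show a * sSup (norm '' G) < sSup (norm '' G) by nlinarith)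
  exact ⟨x₀, hx₀G, fun y hy => (mul_le_mul_of_nonneg_left (hle y hy) ha0).trans_lt hx₀⟩

lemma exists_clm_apply_eq_and_norm_apply_le {𝕜 E : Type*} [RCLike 𝕜] [NormedAddCommGroup E]
    [NormedSpace 𝕜 E] {x₀ : E} (hx₀ : x₀ ≠ 0) (c : ℝ) :
    ∃ L : E →L[𝕜] 𝕜, L x₀ = c ∧ ∀ y, ‖L y‖ ≤ |c| / ‖x₀‖ * ‖y‖ := by
  obtain ⟨g, hg, hgx⟩ := exists_dual_vector 𝕜 x₀ (norm_ne_zero_iff.mpr hx₀)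
  refine ⟨((c / ‖x₀‖ : ℝ) : 𝕜) • g, ?_, fun y => ?_⟩
  · rw [_root_.smul_apply, hgx, smul_eq_mul, ← RCLike.ofReal_mul,
      div_mul_cancel₀ _ (norm_ne_zero_iff.mpr hx₀)]
  · rw [_root_.smul_apply, norm_smul, RCLike.norm_ofReal, abs_div, abs_norm]
    gcongr
    simpa [hg] using g.le_opNorm y

lemma Bornology.IsBounded.exists_mem_clm_apply_eq_sq_norm_lt {X : Type*} [NormedAddCommGroup X]
    [NormedSpace ℂ X] {G : Set X} (hG : Bornology.IsBounded G) {y₁ : X} (hy₁G : y₁ ∈ G)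
    (hy₁ : y₁ ≠ 0) {a : ℝ} (ha0 : 0 < a) (ha1 : a < 1) :
    ∃ x₀ ∈ G, ∃ L : X →L[ℂ] ℂ, L x₀ = (a ^ 2 : ℝ) ∧ ∀ y ∈ G, ‖L y‖ < a := by
  obtain ⟨x₀, hx₀G, hx₀⟩ :=
    exists_mem_forall_mul_norm_lt_norm hG hy₁G (norm_pos_iff.mpr hy₁) ha0.le ha1
  have hx₀0 : 0 < ‖x₀‖ := by nlinarith [hx₀ x₀ hx₀G, norm_nonneg x₀]
  obtain ⟨L, hLx₀, hL⟩ :=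
    exists_clm_apply_eq_and_norm_apply_le (𝕜 := ℂ) (norm_pos_iff.mp hx₀0) (a ^ 2)
  refine ⟨x₀, hx₀G, L, hLx₀, fun y hy => (hL y).trans_lt ?_⟩
  rw [abs_of_nonneg (sq_nonneg a), div_mul_eq_mul_div, div_lt_iff₀ hx₀0]
  nlinarith [hx₀ y hy]

theorem bohr_exteriorDisk_sharp_general {X : Type*} [NormedAddCommGroup X] [NormedSpace ℂ X]
    [Nontrivial X]
    (G : Set X) (hGopen : IsOpen G) (hGconn : IsConnected G)
    (hGbdd : Bornology.IsBounded G)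
    (hGbal : ∀ z : ℂ, ‖z‖ ≤ 1 → z • G ⊆ G)
    (r₀ : ℝ) (hr₀ : 1 / 3 < r₀) (hr₀' : r₀ < 1) :
    ∃ (f : X → ℂ) (p : FormalMultilinearSeries ℂ X ℂ),
      DifferentiableOn ℂ f G ∧ Set.MapsTo f G {z : ℂ | 1 < ‖z‖} ∧
      HasFPowerSeriesAt f p 0 ∧
      ∃ x ∈ (r₀ : ℂ) • G,
        Summable (fun m : ℕ => ‖p m (fun _ => x)‖) ∧
        sphericalDist ‖f 0‖ 1 <
          sphericalDist (∑' m : ℕ, ‖p m (fun _ => x)‖) ‖f 0‖ := by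
  have h0G : (0 : X) ∈ G :=
    hGbal 0 (by simp) (by rw [Set.zero_smul_set hGconn.nonempty]; exact Set.zero_mem_zero)
  obtain ⟨y₁, hy₁G, hy₁⟩ : ∃ y ∈ G, y ≠ 0 :=
    (((hGopen.eventually_mem h0G).filter_mono nhdsWithin_le_nhds).and
      (self_mem_nhdsWithin : {(0 : X)}ᶜ ∈ 𝓝[≠] 0)).exists
  obtain ⟨a, ha0, ha1, hcond⟩ := exists_near_one_of_one_third_lt hr₀
  obtain ⟨x₀, hx₀G, L, hLx₀, hLG⟩ :=
    hGbdd.exists_mem_clm_apply_eq_sq_norm_lt hy₁G hy₁ ha0 ha1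
  have hLa : ∀ y ∈ G, L y ≠ a := fun y hy h => by
    simpa [h, abs_of_pos ha0] using hLG y hy
  have hLx : L ((r₀ : ℂ) • x₀) = (a ^ 2 * r₀ : ℝ) := by
    simp [hLx₀, mul_comm]
  have ht0 : 0 < a ^ 2 * r₀ := by positivity
  have hta : a ^ 2 * r₀ < a := by nlinarith
  have hsum := hasSum_norm_invBlaschkeSeries_comp_apply ha0 ha1.le ht0.le hta hLx
  refine ⟨invBlaschke a ∘ L, _, fun y hy =>
    ((differentiableAt_invBlaschke (hLa y hy)).comp y L.differentiableAt).differentiableWithinAt,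
    fun y hy =>
      one_lt_norm_invBlaschke (abs_lt.mpr ⟨by linarith, ha1⟩) ((hLG y hy).trans ha1) (hLa y hy),
    (map_zero L ▸ (hasFPowerSeriesOnBall_invBlaschke ha0 ha1.le).hasFPowerSeriesAt
      ).compContinuousLinearMap,
    _, Set.smul_mem_smul_set hx₀G, hsum.summable, ?_⟩
  rw [hsum.tsum_eq, Function.comp_apply, map_zero, invBlaschke_zero, Complex.norm_real,
    Real.norm_of_nonneg (by positivity)]
  exact sphericalDist_inv_one_lt ht0 hta ha1 hcond

/-- Sharpness of the constant `1/3` in the spherical Bohr theorem for holomorphic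
maps from a bounded balanced domain `G` of a nontrivial complex Banach space into
the exterior `{|z| > 1}` of the closed unit disk: for any `1/3 < r₀ < 1` there are
`f ∈ H(G, {|z| > 1})` and `x ∈ r₀·G` with
`λ(Σ_{m≥0} |(1/m!)Dᵐf(0)(xᵐ)|, |f(0)|) > λ(|f(0)|, 1)`. -/
theorem bohr_exteriorDisk_sharp {X : Type*} [NormedAddCommGroup X] [NormedSpace ℂ X]
    [CompleteSpace X] [Nontrivial X]
    (G : Set X) (hGopen : IsOpen G) (hGconn : IsConnected G)
    (hGbdd : Bornology.IsBounded G)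
    (hGbal : ∀ z : ℂ, ‖z‖ ≤ 1 → z • G ⊆ G)
    (r₀ : ℝ) (hr₀ : 1 / 3 < r₀) (hr₀' : r₀ < 1) :
    ∃ (f : X → ℂ) (p : FormalMultilinearSeries ℂ X ℂ),
      DifferentiableOn ℂ f G ∧ Set.MapsTo f G {z : ℂ | 1 < ‖z‖} ∧
      HasFPowerSeriesAt f p 0 ∧
      ∃ x ∈ (r₀ : ℂ) • G,
        Summable (fun m : ℕ => ‖p m (fun _ => x)‖) ∧
        sphericalDist ‖f 0‖ 1 <
          sphericalDist (∑' m : ℕ, ‖p m (fun _ => x)‖) ‖f 0‖ :=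
  bohr_exteriorDisk_sharp_general G hGopen hGconn hGbdd hGbal r₀ hr₀ hr₀'
end

section
/- Let X be a complex Banach space, G ⊆ X a bounded balanced domain, and f : G → ℂ a holomorphic function whose values lie in the right half-plane ℍ = {z : Re z > 0}, with power series expansion f(x) = f(0) + Σ_{m≥1} (1/m!) D^m f(0)(x^m) in a neighbourhood of the origin. Then for every y ∈ G and every m ≥ 1, |(1/m!) D^m f(0)(y^m)| ≤ 2·Re f(0). -/
/-!
Restricting `f` to the complex line through `y` gives `g z = f (z • y)`, holomorphic on a
neighbourhood of the closed unit disc (as `G` is balanced) with `Re g > 0` there, and with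
Taylor coefficients `p m (y, …, y)`. For `m ≥ 1` the mean of `z ^ m * g z` over the unit circle
vanishes; since `conj z = z⁻¹` on that circle, adding its conjugate to the Cauchy formula for the
`m`-th coefficient turns it into the mean of `z⁻¹ ^ m * 2 Re g z`, whose modulus is at most the
mean of `2 Re g`, i.e. `2 Re g 0`.
-/

open scoped Pointwise

open Complex ComplexConjugate Metric Real

theorem Real.norm_circleAverage_le_circleAverage_norm {E : Type*} [NormedAddCommGroup E]
    [NormedSpace ℝ E] (f : ℂ → E) (c : ℂ) (R : ℝ) :
    ‖circleAverage f c R‖ ≤ circleAverage (fun z ↦ ‖f z‖) c R := by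
  rw [circleAverage_def, circleAverage_def, norm_smul, Real.norm_of_nonneg (by positivity),
    smul_eq_mul]
  gcongr
  exact intervalIntegral.norm_integral_le_integral_norm two_pi_pos.le

theorem cauchyPowerSeries_apply_eq_circleAverage {E : Type*} [NormedAddCommGroup E]
    [NormedSpace ℂ E] (f : ℂ → E) (c : ℂ) {R : ℝ} (hR : R ≠ 0) (n : ℕ) (w : ℂ) :
    (cauchyPowerSeries f c R n fun _ ↦ w) =
      circleAverage (fun z ↦ (w / (z - c)) ^ n • f z) c R := by
  rw [cauchyPowerSeries_apply, circleAverage_eq_circleIntegral hR]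
  simp only [smul_comm _ ((w / _) ^ n)]

theorem DiffContOnCl.circleAverage_sub_pow_smul {E : Type*} [NormedAddCommGroup E]
    [NormedSpace ℂ E] [CompleteSpace E] {f : ℂ → E} {c : ℂ} {R : ℝ}
    (hf : DiffContOnCl ℂ f (ball c |R|)) {n : ℕ} (hn : n ≠ 0) :
    Real.circleAverage (fun z ↦ (z - c) ^ n • f z) c R = 0 := by
  have h : DiffContOnCl ℂ (fun z ↦ (z - c) ^ n • f z) (ball c |R|) :=
    ((differentiable_id.sub_const c).pow n).diffContOnCl.smul hf
  simp [h.circleAverage, hn]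

theorem DiffContOnCl.circleAverage_inv_pow_mul_eq_re {g : ℂ → ℂ}
    (hg : DiffContOnCl ℂ g (ball 0 1)) {n : ℕ} (hn : n ≠ 0) :
    Real.circleAverage (fun z ↦ z⁻¹ ^ n * g z) 0 1 =
      Real.circleAverage (fun z ↦ z⁻¹ ^ n * (2 * (g z).re)) 0 1 := by
  have hg' : DiffContOnCl ℂ g (ball 0 |1|) := by rwa [abs_one]
  have hcont : ContinuousOn g (sphere 0 |1|) := hg'.continuousOn_ball.mono sphere_subset_closedBall
  have hinv : ContinuousOn (fun z : ℂ ↦ z⁻¹) (sphere 0 |1|) :=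
    continuousOn_inv₀.mono fun z hz ↦ ne_zero_of_mem_sphere (by norm_num) ⟨z, hz⟩
  have hpow : ContinuousOn (fun z ↦ z ^ n * g z) (sphere 0 |1|) :=
    (continuousOn_id.pow n).mul hcont
  have hconj : Real.circleAverage (fun z ↦ conj (z ^ n * g z)) 0 1 = 0 := by
    have := conjCLE.toContinuousLinearMap.circleAverage_comp_comm hpow.circleIntegrable'
    simp only [Function.comp_def, ContinuousLinearEquiv.coe_coe, conjCLE_apply] at this
    have hzero : Real.circleAverage (fun z ↦ z ^ n * g z) 0 1 = 0 := by
      simpa using hg'.circleAverage_sub_pow_smul hn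
    rw [this, hzero, map_zero]
  have hinvpow : CircleIntegrable (fun z ↦ z⁻¹ ^ n * g z) 0 1 :=
    ContinuousOn.circleIntegrable' ((hinv.pow n).mul hcont)
  calc Real.circleAverage (fun z ↦ z⁻¹ ^ n * g z) 0 1
      = Real.circleAverage (fun z ↦ z⁻¹ ^ n * g z + conj (z ^ n * g z)) 0 1 := by
        rw [circleAverage_fun_add (f₂ := fun z ↦ conj (z ^ n * g z)) hinvpow
          (continuous_conj.comp_continuousOn hpow).circleIntegrable', hconj, add_zero]
    _ = Real.circleAverage (fun z ↦ z⁻¹ ^ n * (2 * (g z).re)) 0 1 := by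
        refine circleAverage_congr_sphere fun z hz ↦ ?_
        have hz1 : ‖z‖ = 1 := by simpa using hz
        have hconjz : conj z = z⁻¹ := by
          rw [Complex.inv_def, Complex.normSq_eq_norm_sq, hz1]
          simp
        simp only [map_mul, map_pow, hconjz]
        rw [← mul_add, Complex.add_conj]
        push_cast
        ring

theorem HasFPowerSeriesAt.norm_coeff_le_two_mul_re {g : ℂ → ℂ}
    {q : FormalMultilinearSeries ℂ ℂ ℂ} (hq : HasFPowerSeriesAt g q 0)
    (hg : DiffContOnCl ℂ g (ball 0 1)) (hre : ∀ z ∈ sphere (0 : ℂ) 1, 0 ≤ (g z).re)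
    {n : ℕ} (hn : n ≠ 0) :
    ‖q n fun _ ↦ 1‖ ≤ 2 * (g 0).re := by
  have hcauchy : q = cauchyPowerSeries g 0 1 := by
    have := hg.hasFPowerSeriesOnBall (R := 1) one_pos
    simp only [NNReal.coe_one] at this
    exact hq.eq_formalMultilinearSeries this.hasFPowerSeriesAt
  have hg' : DiffContOnCl ℂ g (ball 0 |1|) := by rwa [abs_one]
  have hmean : circleAverage (fun z ↦ 2 * (g z).re) 0 1 = 2 * (g 0).re := by
    have h2g : DiffContOnCl ℂ (fun z ↦ 2 * g z) (ball 0 |1|) := hg'.const_smul (2 : ℂ)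
    have hint : CircleIntegrable (fun z ↦ 2 * g z) 0 1 :=
      (h2g.continuousOn_ball.mono sphere_subset_closedBall).circleIntegrable'
    calc circleAverage (fun z ↦ 2 * (g z).re) 0 1
        = (circleAverage (fun z ↦ 2 * g z) 0 1).re := by
          simpa [Function.comp_def] using reCLM.circleAverage_comp_comm hint
      _ = 2 * (g 0).re := by simp [h2g.circleAverage]
  calc ‖q n fun _ ↦ 1‖
      = ‖circleAverage (fun z ↦ z⁻¹ ^ n * (2 * (g z).re)) 0 1‖ := by
        rw [hcauchy, cauchyPowerSeries_apply_eq_circleAverage g 0 one_ne_zero,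
          ← hg.circleAverage_inv_pow_mul_eq_re hn]
        simp
    _ ≤ circleAverage (fun z ↦ ‖z⁻¹ ^ n * (2 * (g z).re)‖) 0 1 :=
        norm_circleAverage_le_circleAverage_norm _ _ _
    _ = circleAverage (fun z ↦ 2 * (g z).re) 0 1 := by
        refine circleAverage_congr_sphere fun z hz ↦ ?_
        have hz1 : ‖z‖ = 1 := by simpa using hz
        have h0 : 0 ≤ (g z).re := hre z (by simpa using hz)
        simp [hz1, h0]
    _ = 2 * (g 0).re := hmean

theorem halfPlane_coeff_bound_general {X : Type*} [NormedAddCommGroup X] [NormedSpace ℂ X]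
    (G : Set X)
    (hGbal : ∀ z : ℂ, ‖z‖ ≤ 1 → z • G ⊆ G)
    (f : X → ℂ) (hf : DifferentiableOn ℂ f G)
    (hmaps : Set.MapsTo f G {z : ℂ | 0 < z.re})
    (p : FormalMultilinearSeries ℂ X ℂ) (hp : HasFPowerSeriesAt f p 0)
    (y : X) (hy : y ∈ G) :
    ∀ m : ℕ, 1 ≤ m → ‖p m (fun _ => y)‖ ≤ 2 * (f 0).re := by
  intro m hm
  set u : ℂ →L[ℂ] X := ContinuousLinearMap.toSpanSingleton ℂ y
  have hdisc : closedBall 0 1 ⊆ u ⁻¹' G := fun z hz ↦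
    hGbal z (mem_closedBall_zero_iff.mp hz) (Set.smul_mem_smul_set hy)
  have hseries : HasFPowerSeriesAt (f ∘ u) (p.compContinuousLinearMap u) 0 :=
    HasFPowerSeriesAt.compContinuousLinearMap (by simpa using hp)
  have hdiff : DiffContOnCl ℂ (f ∘ u) (ball 0 1) :=
    (hf.comp u.differentiableOn (Set.mapsTo_preimage u G)).diffContOnCl_ball hdisc
  have hre : ∀ z ∈ sphere (0 : ℂ) 1, 0 ≤ (f (u z)).re := fun z hz ↦
    (hmaps (hdisc (sphere_subset_closedBall hz))).le
  have hcoeff : (p.compContinuousLinearMap u m fun _ ↦ 1) = p m fun _ ↦ y := by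
    rw [FormalMultilinearSeries.compContinuousLinearMap_apply]
    simp [u, Function.comp_def]
  simpa [hcoeff] using hseries.norm_coeff_le_two_mul_re hdiff hre (Nat.one_le_iff_ne_zero.mp hm)

/-- Coefficient bound for holomorphic maps from a bounded balanced domain `G` in
a complex Banach space into the right half-plane: for every `y ∈ G` and `m ≥ 1`,
`|(1/m!) Dᵐf(0)(yᵐ)| ≤ 2 Re f(0)`. -/
theorem halfPlane_coeff_bound {X : Type*} [NormedAddCommGroup X] [NormedSpace ℂ X]
    [CompleteSpace X]
    (G : Set X) (hGopen : IsOpen G) (hGconn : IsConnected G)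
    (hGbdd : Bornology.IsBounded G)
    (hGbal : ∀ z : ℂ, ‖z‖ ≤ 1 → z • G ⊆ G)
    (f : X → ℂ) (hf : DifferentiableOn ℂ f G)
    (hmaps : Set.MapsTo f G {z : ℂ | 0 < z.re})
    (p : FormalMultilinearSeries ℂ X ℂ) (hp : HasFPowerSeriesAt f p 0)
    (y : X) (hy : y ∈ G) :
    ∀ m : ℕ, 1 ≤ m → ‖p m (fun _ => y)‖ ≤ 2 * (f 0).re :=
  halfPlane_coeff_bound_general G hGbal f hf hmaps p hp y hy
end

section
/- Let F(z) = Σ_{m≥0} a_m z^m be an analytic function on the unit disk 𝔻 with values in the slit region T = ℂ \ (−∞, 0] and with F(0) = a_0 > 0 (real and positive). Then |a_m| ≤ 4·F(0)·m for every m ≥ 1. -/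
open Complex Metric intervalIntegral MeasureTheory

/-! Auxiliary lemmas for the coefficient bound for slit-plane-valued analytic functions. -/

lemma slitAux_orth (m : ℤ) :
    ∫ θ in (0:ℝ)..(2*Real.pi), Complex.exp (m * θ * Complex.I)
      = if m = 0 then (2*Real.pi : ℂ) else 0 := by
  rcases eq_or_ne m 0 with rfl | hm
  · simp
  have h : ∀ θ : ℝ, Complex.exp (m * θ * Complex.I) = Complex.exp ((m * Complex.I) * θ) := by
    intro θ; ring_nf
  simp_rw [h]
  rw [integral_exp_mul_complex (by simp [Complex.ext_iff, hm, Complex.I_ne_zero])]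
  have : Complex.exp ((m : ℂ) * Complex.I * (2*Real.pi)) = 1 := by
    rw [show ((m : ℂ) * Complex.I) * (2*Real.pi) = (m : ℤ) * (2 * Real.pi * Complex.I) by ring]
    exact Complex.exp_int_mul_two_pi_mul_I m
  simp [this, hm]

lemma slitAux_int (c : ℕ → ℂ) (hc : Summable fun k => ‖c k‖) (m : ℤ) :
    (∫ θ in (0:ℝ)..(2*Real.pi),
        (∑' k : ℕ, c k * Complex.exp (k * θ * Complex.I)) * Complex.exp (m * θ * Complex.I))
      = ∑' k : ℕ, c k * (if (k : ℤ) + m = 0 then (2*Real.pi : ℂ) else 0) := by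
  have key : ∀ θ : ℝ, (∑' k : ℕ, c k * Complex.exp (k * θ * Complex.I)) * Complex.exp (m * θ * Complex.I)
      = ∑' k : ℕ, c k * Complex.exp ((((k:ℤ)+m) : ℤ) * θ * Complex.I) := by
    intro θ
    rw [← tsum_mul_right]
    congr 1; funext k
    rw [mul_assoc, ← Complex.exp_add]
    congr 2
    push_cast; ring
  simp_rw [key]
  have h2π : (0:ℝ) ≤ 2*Real.pi := by positivity
  rw [intervalIntegral.integral_of_le h2π]
  have hint : ∀ k : ℕ, Integrable (fun θ : ℝ => c k * Complex.exp ((((k:ℤ)+m) : ℤ) * θ * Complex.I))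
      (volume.restrict (Set.Ioc 0 (2*Real.pi))) := by
    intro k
    apply Continuous.integrableOn_Ioc
    continuity
  have hnorm : ∀ k (θ : ℝ), ‖c k * Complex.exp ((((k:ℤ)+m) : ℤ) * θ * Complex.I)‖ = ‖c k‖ := by
    intro k θ
    rw [norm_mul, Complex.norm_exp]
    have : (((((k:ℤ)+m) : ℤ) : ℂ) * θ * Complex.I).re = 0 := by
      simp [Complex.mul_re, Complex.mul_im]
    rw [this, Real.exp_zero, mul_one]
  rw [← MeasureTheory.integral_tsum_of_summable_integral_norm hint]
  · congr 1; funext k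
    rw [MeasureTheory.integral_const_mul, ← intervalIntegral.integral_of_le h2π, slitAux_orth]
  · have : ∀ k : ℕ, (∫ θ, ‖c k * Complex.exp ((((k:ℤ)+m) : ℤ) * θ * Complex.I)‖
        ∂(volume.restrict (Set.Ioc 0 (2*Real.pi)))) = ‖c k‖ * (2*Real.pi) := by
      intro k
      simp_rw [hnorm]
      rw [MeasureTheory.integral_const]
      simp [Real.volume_Ioc, ENNReal.toReal_ofReal h2π]
      rw [max_eq_left (by positivity)]
      ring
    simp_rw [this]
    exact hc.mul_right _

lemma slitAux_coeff (c : ℕ → ℂ) (hc : Summable fun k => ‖c k‖) (n : ℕ) :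
    (∫ θ in (0:ℝ)..(2*Real.pi),
        (∑' k : ℕ, c k * Complex.exp (k * θ * Complex.I)) * Complex.exp ((-(n:ℤ)) * θ * Complex.I))
      = 2*Real.pi * c n := by
  have h := slitAux_int c hc (-(n:ℤ))
  push_cast at h ⊢
  rw [h, tsum_eq_single n]
  · rw [if_pos (by ring : (n:ℤ) + -(n:ℤ) = 0)]; ring
  · intro k hk
    have hne : ¬((k:ℤ) + -(n:ℤ) = 0) := by omega
    rw [if_neg hne, mul_zero]

lemma slitAux_hi (c : ℕ → ℂ) (hc : Summable fun k => ‖c k‖) (n : ℕ) (hn : 1 ≤ n) :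
    (∫ θ in (0:ℝ)..(2*Real.pi),
        (∑' k : ℕ, c k * Complex.exp (k * θ * Complex.I)) * Complex.exp ((n:ℤ) * θ * Complex.I))
      = 0 := by
  have h := slitAux_int c hc (n:ℤ)
  push_cast at h ⊢
  rw [h]
  convert tsum_zero with k
  have : ¬ ((k:ℤ) + n = 0) := by omega
  simp [this]

/-- Carathéodory-type bound: if `G = Σ bₖ zᵏ` on `ball 0 ρ` has positive real part and
`b 0 = s > 0` is real, then `|bₙ| rⁿ ≤ 2 s` for `0 < r < ρ` and `n ≥ 1`. -/
lemma slitAux_cara (G : ℂ → ℂ) (b : ℕ → ℂ) (ρ : ℝ)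
    (hb : ∀ z ∈ ball (0:ℂ) ρ, HasSum (fun k => b k * z ^ k) (G z))
    (hGc : ContinuousOn G (ball (0:ℂ) ρ))
    (hre : ∀ z ∈ ball (0:ℂ) ρ, 0 < (G z).re)
    (s : ℝ) (hs : 0 < s) (hb0 : b 0 = (s:ℂ))
    (r : ℝ) (hr0 : 0 < r) (hrρ : r < ρ)
    (n : ℕ) (hn : 1 ≤ n) :
    ‖b n‖ * r ^ n ≤ 2 * s := by
  set c : ℕ → ℂ := fun k => b k * (r:ℂ)^k with hc_def
  have hrmem : ((r:ℝ):ℂ) ∈ ball (0:ℂ) ρ := by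
    simp only [mem_ball, dist_zero_right, Complex.norm_real, Real.norm_eq_abs]
    rwa [abs_of_pos hr0]
  have hcs : Summable fun k => ‖c k‖ := summable_norm_iff.mpr (hb _ hrmem).summable
  have hmem : ∀ θ : ℝ, ((r:ℝ):ℂ) * Complex.exp (θ*Complex.I) ∈ ball (0:ℂ) ρ := by
    intro θ
    simp only [mem_ball, dist_zero_right, norm_mul, Complex.norm_exp]
    simp [Complex.norm_of_nonneg hr0.le, abs_of_pos hr0, hrρ]
  set g : ℝ → ℂ := fun θ => G (((r:ℝ):ℂ) * Complex.exp (θ*Complex.I)) with hg_def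
  have hg : ∀ θ : ℝ, g θ = ∑' k : ℕ, c k * Complex.exp (k * θ * Complex.I) := by
    intro θ
    simp only [hg_def]
    rw [← (hb _ (hmem θ)).tsum_eq]
    congr 1; funext k
    rw [mul_pow, ← Complex.exp_nat_mul]
    simp only [hc_def]
    ring_nf
  have gcont : Continuous g := by
    apply hGc.comp_continuous
    · continuity
    · exact hmem
  have h2π : (0:ℝ) ≤ 2*Real.pi := by positivity
  have hπ : (0:ℝ) < 2*Real.pi := by positivity
  have I1 : (∫ θ in (0:ℝ)..(2*Real.pi), g θ * Complex.exp ((-(n:ℤ)) * θ * Complex.I))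
      = 2*Real.pi * c n := by
    rw [intervalIntegral.integral_congr (g := fun θ : ℝ =>
      (∑' k : ℕ, c k * Complex.exp (k * θ * Complex.I)) * Complex.exp ((-(n:ℤ)) * θ * Complex.I))
      (fun θ _ => by rw [hg θ])]
    exact slitAux_coeff c hcs n
  have Ihi : (∫ θ in (0:ℝ)..(2*Real.pi), g θ * Complex.exp (((n:ℤ)) * θ * Complex.I)) = 0 := by
    rw [intervalIntegral.integral_congr (g := fun θ : ℝ =>
      (∑' k : ℕ, c k * Complex.exp (k * θ * Complex.I)) * Complex.exp (((n:ℤ)) * θ * Complex.I))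
      (fun θ _ => by rw [hg θ])]
    exact slitAux_hi c hcs n hn
  have I0 : (∫ θ in (0:ℝ)..(2*Real.pi), g θ) = 2*Real.pi * (s:ℂ) := by
    have e0 : ∀ θ : ℝ, g θ = (∑' k : ℕ, c k * Complex.exp (k * θ * Complex.I))
        * Complex.exp ((-((0:ℕ):ℤ)) * θ * Complex.I) := by
      intro θ
      rw [hg θ]
      simp
    rw [intervalIntegral.integral_congr (fun θ _ => e0 θ), slitAux_coeff c hcs 0]
    simp [hc_def, hb0]
  have I2 : (∫ θ in (0:ℝ)..(2*Real.pi), (starRingEnd ℂ) (g θ) * Complex.exp ((-(n:ℤ)) * θ * Complex.I)) = 0 := by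
    have key : ∀ θ : ℝ, (starRingEnd ℂ) (g θ) * Complex.exp ((-(n:ℤ)) * θ * Complex.I)
        = (starRingEnd ℂ) (g θ * Complex.exp (((n:ℤ)) * θ * Complex.I)) := by
      intro θ
      rw [map_mul]
      congr 1
      rw [← Complex.exp_conj]
      congr 1
      simp [map_mul, Complex.conj_I, Complex.conj_ofReal]
    rw [intervalIntegral.integral_congr (fun θ _ => key θ)]
    rw [intervalIntegral.integral_of_le h2π, integral_conj,
      ← intervalIntegral.integral_of_le h2π, Ihi, map_zero]
  have hgint : IntervalIntegrable (fun θ => g θ * Complex.exp ((-(n:ℤ)) * θ * Complex.I)) volume 0 (2*Real.pi) := by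
    apply Continuous.intervalIntegrable
    continuity
  have hgcint : IntervalIntegrable (fun θ => (starRingEnd ℂ) (g θ) * Complex.exp ((-(n:ℤ)) * θ * Complex.I)) volume 0 (2*Real.pi) := by
    apply Continuous.intervalIntegrable
    exact ((Complex.continuous_conj.comp gcont).mul (by continuity))
  have hJ : (∫ θ in (0:ℝ)..(2*Real.pi), (g θ + (starRingEnd ℂ) (g θ)) * Complex.exp ((-(n:ℤ)) * θ * Complex.I))
      = 2*Real.pi * c n := by
    have : ∀ θ : ℝ, (g θ + (starRingEnd ℂ) (g θ)) * Complex.exp ((-(n:ℤ)) * θ * Complex.I)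
        = g θ * Complex.exp ((-(n:ℤ)) * θ * Complex.I)
          + (starRingEnd ℂ) (g θ) * Complex.exp ((-(n:ℤ)) * θ * Complex.I) := fun θ => by ring
    rw [intervalIntegral.integral_congr (fun θ _ => this θ),
      intervalIntegral.integral_add hgint hgcint, I1, I2, add_zero]
  have hnormpt : ∀ θ : ℝ, ‖(g θ + (starRingEnd ℂ) (g θ)) * Complex.exp ((-(n:ℤ)) * θ * Complex.I)‖
      = 2 * (g θ).re := by
    intro θ
    rw [norm_mul]
    have he : ‖Complex.exp ((-(n:ℤ)) * (θ:ℂ) * Complex.I)‖ = 1 := by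
      rw [Complex.norm_exp]
      have : (((-(n:ℤ)):ℂ) * θ * Complex.I).re = 0 := by
        simp [Complex.mul_re, Complex.mul_im]
      rw [this, Real.exp_zero]
    rw [he, mul_one, Complex.add_conj]
    rw [Complex.norm_real, Real.norm_eq_abs]
    exact abs_of_pos (by linarith [hre _ (hmem θ)])
  have hbound : ‖(2*Real.pi : ℂ) * c n‖ ≤ 2*Real.pi * (2*s) := by
    rw [← hJ]
    calc ‖∫ θ in (0:ℝ)..(2*Real.pi), (g θ + (starRingEnd ℂ) (g θ)) * Complex.exp ((-(n:ℤ)) * θ * Complex.I)‖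
        ≤ ∫ θ in (0:ℝ)..(2*Real.pi), ‖(g θ + (starRingEnd ℂ) (g θ)) * Complex.exp ((-(n:ℤ)) * θ * Complex.I)‖ :=
          intervalIntegral.norm_integral_le_integral_norm h2π
      _ = ∫ θ in (0:ℝ)..(2*Real.pi), 2 * (g θ).re := by
          exact intervalIntegral.integral_congr (fun θ _ => hnormpt θ)
      _ = 2 * ((∫ θ in (0:ℝ)..(2*Real.pi), g θ).re) := by
          rw [intervalIntegral.integral_of_le h2π, intervalIntegral.integral_of_le h2π,
            MeasureTheory.integral_const_mul]
          congr 1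
          have h := integral_re (𝕜 := ℂ) (μ := MeasureTheory.volume.restrict (Set.Ioc 0 (2*Real.pi))) (f := g) (gcont.integrableOn_Ioc)
          rw [RCLike.re_eq_complex_re] at h
          exact h
      _ = 2*Real.pi * (2*s) := by
          rw [I0]
          simp
          ring
  have habs : ‖(2*Real.pi : ℂ) * c n‖ = 2*Real.pi * (‖b n‖ * r ^ n) := by
    simp only [hc_def, norm_mul, norm_pow, Complex.norm_real, Real.norm_eq_abs,
      Complex.norm_two]
    rw [_root_.abs_of_pos hr0, _root_.abs_of_pos Real.pi_pos]
    try ring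
  rw [habs] at hbound
  exact le_of_mul_le_mul_left hbound hπ

/-- Cauchy-product identity relating the coefficients of `F = G²` to those of `G`. -/
lemma slitAux_conv (F G : ℂ → ℂ) (a b : ℕ → ℂ) (ρ r : ℝ) (hρ1 : ρ ≤ 1)
    (hF : ∀ z ∈ ball (0:ℂ) 1, HasSum (fun n : ℕ => a n * z ^ n) (F z))
    (hb : ∀ z ∈ ball (0:ℂ) ρ, HasSum (fun k : ℕ => b k * z ^ k) (G z))
    (hsq : ∀ z ∈ ball (0:ℂ) 1, G z * G z = F z)
    (hr0 : 0 < r) (hrρ : r < ρ) (m : ℕ) :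
    a m * ((r:ℝ):ℂ)^m = ∑ kl ∈ Finset.HasAntidiagonal.antidiagonal m,
      (b kl.1 * ((r:ℝ):ℂ)^kl.1) * (b kl.2 * ((r:ℝ):ℂ)^kl.2) := by
  set c : ℕ → ℂ := fun k => b k * ((r:ℝ):ℂ)^k with hc_def
  set e : ℕ → ℂ := fun k => a k * ((r:ℝ):ℂ)^k with he_def
  set d : ℕ → ℂ := fun n => ∑ kl ∈ Finset.HasAntidiagonal.antidiagonal n, c kl.1 * c kl.2 with hd_def
  have hrρ1 : r < 1 := lt_of_lt_of_le hrρ hρ1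
  have hrmem : ((r:ℝ):ℂ) ∈ ball (0:ℂ) ρ := by
    simp only [mem_ball, dist_zero_right, Complex.norm_real, Real.norm_eq_abs]
    rwa [abs_of_pos hr0]
  have hrmem1 : ((r:ℝ):ℂ) ∈ ball (0:ℂ) 1 := by
    simp only [mem_ball, dist_zero_right, Complex.norm_real, Real.norm_eq_abs]
    rwa [abs_of_pos hr0]
  have hcs : Summable fun k => ‖c k‖ := summable_norm_iff.mpr (hb _ hrmem).summable
  have hes : Summable fun k => ‖e k‖ := summable_norm_iff.mpr (hF _ hrmem1).summable
  have hds : Summable fun n => ‖d n‖ := by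
    have h := summable_norm_sum_mul_antidiagonal_of_summable_norm hcs hcs
    exact h
  have hmem : ∀ θ : ℝ, ((r:ℝ):ℂ) * Complex.exp (θ*Complex.I) ∈ ball (0:ℂ) ρ := by
    intro θ
    simp only [mem_ball, dist_zero_right, norm_mul, Complex.norm_exp]
    simp [Complex.norm_of_nonneg hr0.le, abs_of_pos hr0, hrρ]
  have hmem1 : ∀ θ : ℝ, ((r:ℝ):ℂ) * Complex.exp (θ*Complex.I) ∈ ball (0:ℂ) 1 :=
    fun θ => Set.mem_of_mem_of_subset (hmem θ) (ball_subset_ball hρ1)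
  have hpt : ∀ θ : ℝ, (∑' k : ℕ, e k * Complex.exp (k * θ * Complex.I))
      = ∑' n : ℕ, d n * Complex.exp (n * θ * Complex.I) := by
    intro θ
    have hFpt : (∑' k : ℕ, e k * Complex.exp (k * θ * Complex.I))
        = F (((r:ℝ):ℂ) * Complex.exp (θ*Complex.I)) := by
      rw [← (hF _ (hmem1 θ)).tsum_eq]
      congr 1; funext k
      rw [mul_pow, ← Complex.exp_nat_mul]
      simp only [he_def]
      ring_nf
    have hGpt : G (((r:ℝ):ℂ) * Complex.exp (θ*Complex.I))
        = ∑' k : ℕ, c k * Complex.exp (k * θ * Complex.I) := by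
      rw [← (hb _ (hmem θ)).tsum_eq]
      congr 1; funext k
      rw [mul_pow, ← Complex.exp_nat_mul]
      simp only [hc_def]
      ring_nf
    have hsum' : Summable fun k => ‖c k * Complex.exp (k * θ * Complex.I)‖ := by
      apply Summable.congr hcs
      intro k
      have hre0 : ((k:ℂ) * θ * Complex.I).re = 0 := by
        simp [Complex.mul_re, Complex.mul_im]
      simp [norm_mul, Complex.norm_exp, hre0]
    have hcauchy := tsum_mul_tsum_eq_tsum_sum_antidiagonal_of_summable_norm hsum' hsum'
    rw [hFpt, ← hsq _ (hmem1 θ), hGpt, hcauchy]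
    congr 1; funext n
    rw [hd_def, Finset.sum_mul]
    apply Finset.sum_congr rfl
    intro kl hkl
    have hklm : kl.1 + kl.2 = n := Finset.HasAntidiagonal.mem_antidiagonal.mp hkl
    have hexp : ((kl.1 + kl.2 : ℕ) : ℂ) * θ * Complex.I
        = (kl.1:ℂ)*θ*Complex.I + (kl.2:ℂ)*θ*Complex.I := by push_cast; ring
    rw [← hklm, hexp, Complex.exp_add]
    ring
  have h1 := slitAux_coeff e hes m
  have h2 := slitAux_coeff d hds m
  have : (2*Real.pi : ℂ) * e m = 2*Real.pi * d m := by
    rw [← h1, ← h2]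
    congr 1
    funext θ
    rw [hpt θ]
  have hπ : (2*Real.pi : ℂ) ≠ 0 := by
    simp [Complex.ext_iff, Real.pi_ne_zero]
  have hem : e m = d m := mul_left_cancel₀ hπ this
  simpa [he_def, hd_def, hc_def] using hem

/-- The formal power series with scalar coefficients `a`. -/
noncomputable def slitAux_ps (a : ℕ → ℂ) : FormalMultilinearSeries ℂ ℂ ℂ :=
  fun n => ContinuousMultilinearMap.mkPiRing ℂ (Fin n) (a n)

lemma slitAux_hasF (F : ℂ → ℂ) (a : ℕ → ℂ)
    (hF : ∀ z ∈ Metric.ball (0 : ℂ) 1, HasSum (fun n : ℕ => a n * z ^ n) (F z)) :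
    HasFPowerSeriesOnBall F (slitAux_ps a) 0 1 := by
  have hsum : ∀ y : ℂ, y ∈ Metric.eball (0:ℂ) 1 → HasSum (fun n => (slitAux_ps a n) fun _ => y) (F (0 + y)) := by
    intro y hy
    have hy' : y ∈ Metric.ball (0:ℂ) 1 := by
      rw [show (1:ENNReal) = ((1:NNReal):ENNReal) by norm_cast, Metric.emetric_ball_nnreal] at hy
      simpa using hy
    have := hF y hy'
    rw [zero_add]
    convert this using 1
    funext n
    simp [slitAux_ps, ContinuousMultilinearMap.mkPiRing_apply, smul_eq_mul, mul_comm]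
  refine ⟨?_, one_pos, fun {y} hy => hsum y hy⟩
  apply ENNReal.le_of_forall_nnreal_lt
  intro r hr
  rw [ENNReal.coe_lt_one_iff] at hr
  apply FormalMultilinearSeries.le_radius_of_summable
  have hmem : ((r : ℝ) : ℂ) ∈ Metric.ball (0:ℂ) 1 := by
    simp only [Metric.mem_ball, dist_zero_right,
      Complex.norm_of_nonneg r.coe_nonneg]
    exact_mod_cast hr
  have hs : Summable (fun n => a n * ((r:ℝ):ℂ) ^ n) := (hF _ hmem).summable
  have := (summable_norm_iff.mpr hs)
  convert this using 1
  funext n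
  simp only [slitAux_ps, ContinuousMultilinearMap.norm_mkPiRing, norm_mul, norm_pow,
    Complex.norm_of_nonneg r.coe_nonneg]

/-- Coefficient bound for analytic functions `F(z) = Σ aₘ zᵐ` on the unit disk
with values in the slit region `T = ℂ \ (-∞, 0]` and `F(0) = a₀ > 0`:
`|aₘ| ≤ 4 F(0) m` for every `m ≥ 1`. -/
theorem slitPlane_coeff_bound (F : ℂ → ℂ) (a : ℕ → ℂ)
    (hF : ∀ z ∈ Metric.ball (0 : ℂ) 1, HasSum (fun n : ℕ => a n * z ^ n) (F z))
    (hmaps : Set.MapsTo F (Metric.ball 0 1) Complex.slitPlane)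
    (h0 : a 0 = F 0) (h0im : (F 0).im = 0) (h0re : 0 < (F 0).re) :
    ∀ m : ℕ, 1 ≤ m → ‖a m‖ ≤ 4 * (F 0).re * m := by
  -- the square root function G of F
  set s : ℝ := Real.exp (Real.log (F 0).re / 2) with hs_def
  have hs : 0 < s := Real.exp_pos _
  have hss : s * s = (F 0).re := by
    rw [hs_def, ← Real.exp_add,
      show Real.log (F 0).re / 2 + Real.log (F 0).re / 2 = Real.log (F 0).re by ring]
    exact Real.exp_log h0re
  set G : ℂ → ℂ := fun z => Complex.exp (Complex.log (F z) / 2) with hG_def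
  have hFdiff : DifferentiableOn ℂ F (ball 0 1) :=
    fun z hz => ((slitAux_hasF F a hF).analyticAt_of_mem (by
      rw [show (1:ENNReal) = ((1:NNReal):ENNReal) by norm_cast, Metric.emetric_ball_nnreal]
      simpa using hz)).differentiableAt.differentiableWithinAt
  have hGdiff : DifferentiableOn ℂ G (ball 0 1) := by
    intro z hz
    have hFz : DifferentiableAt ℂ F z := hFdiff.differentiableAt (isOpen_ball.mem_nhds hz)
    exact (Complex.differentiable_exp.differentiableAt.comp z
      (((Complex.differentiableAt_log (hmaps hz)).comp z hFz).div_const 2)).differentiableWithinAt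
  have hGcont : ContinuousOn G (ball 0 1) := hGdiff.continuousOn
  have hGsq : ∀ z ∈ ball (0:ℂ) 1, G z * G z = F z := by
    intro z hz
    rw [hG_def]
    simp only
    rw [← Complex.exp_add,
      show Complex.log (F z) / 2 + Complex.log (F z) / 2 = Complex.log (F z) by ring]
    exact Complex.exp_log (Complex.slitPlane_ne_zero (hmaps hz))
  have hGre : ∀ z ∈ ball (0:ℂ) 1, 0 < (G z).re := by
    intro z hz
    rw [hG_def]
    simp only
    rw [Complex.exp_re]
    apply mul_pos (Real.exp_pos _)
    have him : (Complex.log (F z) / 2).im = (F z).arg / 2 := by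
      simp [Complex.div_im, Complex.log_im]
    rw [him]
    apply Real.cos_pos_of_mem_Ioo
    constructor
    · have := Complex.neg_pi_lt_arg (F z)
      linarith
    · have h1 := Complex.arg_le_pi (F z)
      have h2 := Complex.slitPlane_arg_ne_pi (hmaps hz)
      have : (F z).arg < Real.pi := lt_of_le_of_ne h1 h2
      linarith
  have hG0 : G 0 = (s:ℂ) := by
    rw [hG_def]
    simp only
    have hF0 : F 0 = ((F 0).re : ℂ) := Complex.ext rfl (by simp [h0im])
    rw [hF0, ← Complex.ofReal_log h0re.le,
      show ((Real.log (F 0).re : ℂ)) / 2 = ((Real.log (F 0).re / 2 : ℝ) : ℂ) by push_cast; ring]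
    exact (Complex.ofReal_exp _).symm
  intro m hm
  -- it suffices to bound `|aₘ| rᵐ` for every `0 < r < 1`
  suffices hsuf : ∀ r : ℝ, 0 < r → r < 1 → ‖a m‖ * r ^ m ≤ 4 * (F 0).re * m by
    have htend : Filter.Tendsto (fun r : ℝ => ‖a m‖ * r ^ m)
        (nhdsWithin 1 (Set.Iio 1)) (nhds (‖a m‖ * 1 ^ m)) :=
      ((continuous_const.mul (continuous_pow m)).tendsto 1).mono_left nhdsWithin_le_nhds
    have hev : ∀ᶠ r in nhdsWithin (1:ℝ) (Set.Iio 1),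
        ‖a m‖ * r ^ m ≤ 4 * (F 0).re * m := by
      filter_upwards [Ioo_mem_nhdsLT_of_mem (by constructor <;> norm_num : (1:ℝ) ∈ Set.Ioc 0 1)]
        with r hr
      exact hsuf r hr.1 hr.2
    have := le_of_tendsto htend hev
    simpa using this
  intro r hr0 hr1
  set ρ : ℝ := (1 + r) / 2 with hρ_def
  have hρr : r < ρ := by rw [hρ_def]; linarith
  have hρ1 : ρ < 1 := by rw [hρ_def]; linarith
  have hρ0 : 0 < ρ := by rw [hρ_def]; linarith
  set ρnn : NNReal := ⟨ρ, hρ0.le⟩ with hρnn_def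
  have hsub : closedBall (0:ℂ) ρ ⊆ ball 0 1 := closedBall_subset_ball hρ1
  have hGρ : DifferentiableOn ℂ G (closedBall 0 (ρnn:ℝ)) := hGdiff.mono hsub
  have hps : HasFPowerSeriesOnBall G (cauchyPowerSeries G 0 ρnn) 0 ρnn :=
    hGρ.hasFPowerSeriesOnBall (by exact_mod_cast hρ0)
  set b : ℕ → ℂ := fun k => (cauchyPowerSeries G 0 ρnn).coeff k with hb_def
  have hb : ∀ z ∈ ball (0:ℂ) ρ, HasSum (fun k => b k * z ^ k) (G z) := by
    intro z hz
    have hz' : z ∈ Metric.eball (0:ℂ) ρnn := by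
      rw [Metric.emetric_ball_nnreal]
      exact hz
    have := hps.hasSum hz'
    rw [zero_add] at this
    convert this using 1
    case e'_3 => rfl
    funext k
    rw [FormalMultilinearSeries.apply_eq_pow_smul_coeff, smul_eq_mul, hb_def, mul_comm]
  have hb0 : b 0 = (s:ℂ) := by
    have h := hps.coeff_zero (fun _ => 1)
    rw [← hG0]
    exact h
  have hcara : ∀ n : ℕ, 1 ≤ n → ‖b n‖ * r ^ n ≤ 2 * s :=
    fun n hn => slitAux_cara G b ρ hb (hGcont.mono (ball_subset_ball hρ1.le))
      (fun z hz => hGre z (ball_subset_ball hρ1.le hz)) s hs hb0 r hr0 hρr n hn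
  have hconv := slitAux_conv F G a b ρ r hρ1.le hF hb hGsq hr0 hρr m
  -- now estimate
  have hu : ∀ k : ℕ, ‖b k * ((r:ℝ):ℂ)^k‖ = ‖b k‖ * r ^ k := by
    intro k
    rw [norm_mul, norm_pow, Complex.norm_real, Real.norm_eq_abs, _root_.abs_of_pos hr0]
  have hu0 : ‖b 0 * ((r:ℝ):ℂ)^0‖ = s := by
    rw [hb0]
    simp [Complex.norm_of_nonneg hs.le, hs.le]
  have huk : ∀ k : ℕ, ‖b k * ((r:ℝ):ℂ)^k‖ ≤ 2 * s := by
    intro k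
    rcases Nat.eq_zero_or_pos k with rfl | hk
    · rw [hu0]; linarith
    · rw [hu k]; exact hcara k hk
  set t : ℕ × ℕ → ℝ := fun kl =>
    ‖b kl.1 * ((r:ℝ):ℂ)^kl.1‖ * ‖b kl.2 * ((r:ℝ):ℂ)^kl.2‖ with ht_def
  have hbound : ‖a m‖ * r ^ m ≤ ∑ kl ∈ Finset.HasAntidiagonal.antidiagonal m, t kl := by
    have h1 : ‖a m‖ * r ^ m = ‖a m * ((r:ℝ):ℂ)^m‖ := by
      rw [norm_mul, norm_pow, Complex.norm_real, Real.norm_eq_abs, _root_.abs_of_pos hr0]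
    rw [h1, hconv]
    refine le_trans (norm_sum_le _ _) (le_of_eq ?_)
    apply Finset.sum_congr rfl
    intro kl _
    rw [ht_def, norm_mul]
  have key : ∑ kl ∈ Finset.HasAntidiagonal.antidiagonal m, t kl ≤ 4 * (s*s) * m := by
    have h0m : ((0:ℕ), m) ∈ Finset.HasAntidiagonal.antidiagonal m := by simp
    have hne : ((m, (0:ℕ)) : ℕ×ℕ) ≠ (0, m) := by
      intro h; rw [Prod.ext_iff] at h; omega
    have hm0' : ((m, (0:ℕ))) ∈ (Finset.HasAntidiagonal.antidiagonal m).erase (0, m) :=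
      Finset.mem_erase.mpr ⟨hne, by simp⟩
    have e1 : ∑ kl ∈ Finset.HasAntidiagonal.antidiagonal m, t kl
        = t (0, m) + ∑ kl ∈ (Finset.HasAntidiagonal.antidiagonal m).erase (0, m), t kl :=
      (Finset.add_sum_erase _ t h0m).symm
    have e2 : ∑ kl ∈ (Finset.HasAntidiagonal.antidiagonal m).erase (0, m), t kl
        = t (m, 0) + ∑ kl ∈ ((Finset.HasAntidiagonal.antidiagonal m).erase (0, m)).erase (m, 0), t kl :=
      (Finset.add_sum_erase _ t hm0').symm
    have hcard : (((Finset.HasAntidiagonal.antidiagonal m).erase (0, m)).erase (m, 0)).card = m - 1 := by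
      rw [Finset.card_erase_of_mem hm0', Finset.card_erase_of_mem h0m,
        Finset.Nat.card_antidiagonal]
      omega
    have hmid : ∑ kl ∈ ((Finset.HasAntidiagonal.antidiagonal m).erase (0, m)).erase (m, 0), t kl
        ≤ ((m - 1 : ℕ) : ℝ) * (2*s * (2*s)) := by
      have h := Finset.sum_le_card_nsmul (((Finset.HasAntidiagonal.antidiagonal m).erase (0, m)).erase (m, 0)) t
        (2*s * (2*s)) (fun kl _ => mul_le_mul (huk _) (huk _) (norm_nonneg _) (by linarith))
      rw [hcard] at h
      simpa [nsmul_eq_mul] using h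
    have ht0m : t (0, m) ≤ s * (2*s) := by
      rw [ht_def]
      simp only
      rw [hu0]
      exact mul_le_mul_of_nonneg_left (huk m) hs.le
    have htm0 : t (m, 0) ≤ 2*s * s := by
      rw [ht_def]
      simp only
      rw [hu0]
      exact mul_le_mul_of_nonneg_right (huk m) hs.le
    have hcast : ((m - 1 : ℕ) : ℝ) = (m:ℝ) - 1 := by
      rw [Nat.cast_sub hm]; simp
    calc ∑ kl ∈ Finset.HasAntidiagonal.antidiagonal m, t kl
        = t (0, m) + (t (m, 0) + ∑ kl ∈ ((Finset.HasAntidiagonal.antidiagonal m).erase (0, m)).erase (m, 0), t kl) := by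
          rw [e1, e2]
      _ ≤ s * (2*s) + (2*s * s + ((m - 1 : ℕ) : ℝ) * (2*s * (2*s))) :=
          add_le_add ht0m (add_le_add htm0 hmid)
      _ = 4 * (s*s) * m := by rw [hcast]; ring
  have := le_trans hbound key
  rwa [hss] at this
end
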